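/- arXiv:1505.06987 — 5 statements merged into one kernel-verified Lean document; each statement's English description precedes it below -/
import Mathlib

section
/- For an n×n matrix A over a commutative ring, if m of its rows are pairwise equal (i.e., there exist m distinct row indices whose rows coincide as vectors), then m! divides the permanent of A. -/
/-!
The permutations of `Sₙ` that only shuffle the `m` equal rows form a subgroup `H ≅ Sₘ`, and
`σ ↦ ∏ i, A i (σ i)` is constant on each left coset `σH`. Hence the permanent is
`|H| = m!` times a sum over `Sₙ ⧸ H`.
-/

/-- The permanent of a square matrix. -/
def perm {n R : Type*} [DecidableEq n] [Fintype n] [CommRing R] (A : Matrix n n R) : R :=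
  ∑ σ : Equiv.Perm n, ∏ i, A i (σ i)

open Equiv

namespace Subgroup

variable {G : Type*} [Group G] [Fintype G] (H : Subgroup G)

theorem sum_eq_card_nsmul_sum_quotient_out {M : Type*} [AddCommMonoid M] [Fintype (G ⧸ H)]
    (t : G → M) (ht : ∀ g, ∀ h ∈ H, t (g * h) = t g) :
    ∑ g, t g = Nat.card H • ∑ q : G ⧸ H, t q.out := by
  classical
  have hout : ∀ g : G, t (g : G ⧸ H).out = t g := fun g => by
    obtain ⟨h, hh⟩ := QuotientGroup.mk_out_eq_mul H g
    rw [hh, ht g h h.2]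
  calc ∑ g, t g = ∑ g, t (groupEquivQuotientProdSubgroup (s := H) g).1.out :=
        Fintype.sum_congr _ _ fun g => (hout g).symm
    _ = ∑ p : (G ⧸ H) × H, t p.1.out :=
        groupEquivQuotientProdSubgroup.sum_comp fun p => t p.1.out
    _ = Nat.card H • ∑ q : G ⧸ H, t q.out := by
        rw [Fintype.sum_prod_type, Finset.smul_sum]
        simp only [Finset.sum_const, Finset.card_univ, Nat.card_eq_fintype_card]

theorem natCast_card_dvd_sum {R : Type*} [Semiring R] (t : G → R)
    (ht : ∀ g, ∀ h ∈ H, t (g * h) = t g) : (Nat.card H : R) ∣ ∑ g, t g := by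
  classical
  exact ⟨_, by rw [sum_eq_card_nsmul_sum_quotient_out H t ht, nsmul_eq_mul]⟩

end Subgroup

theorem Equiv.Perm.comp_viaEmbedding {α β γ : Type*} (ι : α ↪ β) {v : β → γ}
    (hv : ∀ a b, v (ι a) = v (ι b)) (π : Perm α) : v ∘ π.viaEmbedding ι = v := by
  funext j
  by_cases hj : j ∈ Set.range ι
  · obtain ⟨a, rfl⟩ := hj
    simp only [Function.comp_apply, viaEmbedding_apply]
    exact hv _ _
  · simp only [Function.comp_apply, viaEmbedding_apply_of_notMem _ _ _ hj]

theorem Matrix.prod_apply_mul_of_row_perm_eq {n R : Type*} [Fintype n] [CommMonoid R]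
    (A : Matrix n n R) {τ : Perm n} (hτ : ∀ i, A (τ i) = A i) (σ : Perm n) :
    ∏ i, A i ((σ * τ) i) = ∏ i, A i (σ i) :=
  calc ∏ i, A i (σ (τ i)) = ∏ i, A (τ i) (σ (τ i)) := by simp only [hτ]
    _ = ∏ i, A i (σ i) := Equiv.prod_comp τ fun i => A i (σ i)

theorem factorial_dvd_perm_of_rows_eq {n α R : Type*} [DecidableEq n] [Fintype n] [Fintype α]
    [CommRing R] (A : Matrix n n R) (ι : α ↪ n) (hA : ∀ a b, A (ι a) = A (ι b)) :
    ((Fintype.card α).factorial : R) ∣ perm A := by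
  have hcard : Nat.card (Perm.viaEmbeddingHom ι).range = (Fintype.card α).factorial := by
    rw [← Nat.card_congr (MonoidHom.ofInjective (Perm.viaEmbeddingHom_injective ι)).toEquiv,
      Nat.card_perm, Nat.card_eq_fintype_card]
  rw [← hcard]
  refine Subgroup.natCast_card_dvd_sum _ _ ?_
  rintro σ _ ⟨π, rfl⟩
  exact A.prod_apply_mul_of_row_perm_eq (congrFun (Perm.comp_viaEmbedding ι hA π)) σ

/-- If an n×n matrix has m pairwise equal rows (given by an injection of row indices),
then m! divides its permanent. -/
theorem stmt0 {n m : ℕ} {R : Type*} [CommRing R] (A : Matrix (Fin n) (Fin n) R)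
    (f : Fin m → Fin n) (hf : Function.Injective f)
    (heq : ∀ a b : Fin m, A (f a) = A (f b)) :
    ((m.factorial : ℤ) : R) ∣ perm A := by
  simpa using factorial_dvd_perm_of_rows_eq A ⟨f, hf⟩ heq
end

section
/- For a 2n×2n matrix of the block form [[I, A],[I, A]], where I is the n×n identity and A is n×n, the permanent equals 2^n · Perm(A). -/
namespace Stmt7

variable {n : ℕ}

/-- Involution swapping `inl i` and `inr i` for `i ∉ S`. -/
def swapS (S : Finset (Fin n)) : Equiv.Perm (Fin n ⊕ Fin n) where
  toFun x := match x with
    | .inl i => if i ∈ S then .inl i else .inr i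
    | .inr i => if i ∈ S then .inr i else .inl i
  invFun x := match x with
    | .inl i => if i ∈ S then .inl i else .inr i
    | .inr i => if i ∈ S then .inr i else .inl i
  left_inv x := by
    cases x with
    | inl i => by_cases h : i ∈ S <;> simp [h]
    | inr i => by_cases h : i ∈ S <;> simp [h]
  right_inv x := by
    cases x with
    | inl i => by_cases h : i ∈ S <;> simp [h]
    | inr i => by_cases h : i ∈ S <;> simp [h]

def g (p : Finset (Fin n) × Equiv.Perm (Fin n)) : Equiv.Perm (Fin n ⊕ Fin n) :=
  (swapS p.1).trans (Equiv.sumCongr (Equiv.refl _) p.2)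

@[simp] lemma g_inl (S : Finset (Fin n)) (τ : Equiv.Perm (Fin n)) (i : Fin n) :
    g (S, τ) (Sum.inl i) = if i ∈ S then Sum.inl i else Sum.inr (τ i) := by
  by_cases h : i ∈ S <;> simp [g, swapS, Equiv.trans_apply, h]

@[simp] lemma g_inr (S : Finset (Fin n)) (τ : Equiv.Perm (Fin n)) (i : Fin n) :
    g (S, τ) (Sum.inr i) = if i ∈ S then Sum.inr (τ i) else Sum.inl i := by
  by_cases h : i ∈ S <;> simp [g, swapS, Equiv.trans_apply, h]

lemma g_injective : Function.Injective (g (n := n)) := by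
  rintro ⟨S, τ⟩ ⟨S', τ'⟩ h
  have hS : S = S' := by
    ext i
    constructor <;> intro hi
    · by_contra hi'
      have := congrArg (fun σ : Equiv.Perm (Fin n ⊕ Fin n) => σ (Sum.inl i)) h
      simp [hi, hi'] at this
    · by_contra hi'
      have := congrArg (fun σ : Equiv.Perm (Fin n ⊕ Fin n) => σ (Sum.inl i)) h
      simp [hi, hi'] at this
  subst hS
  have hτ : τ = τ' := by
    apply Equiv.ext; intro i
    by_cases hi : i ∈ S
    · have := congrArg (fun σ : Equiv.Perm (Fin n ⊕ Fin n) => σ (Sum.inr i)) h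
      simpa [hi] using this
    · have := congrArg (fun σ : Equiv.Perm (Fin n ⊕ Fin n) => σ (Sum.inl i)) h
      simpa [hi] using this
  simp [hτ]

end Stmt7

namespace Stmt7

lemma exists_preimage (σ : Equiv.Perm (Fin n ⊕ Fin n))
    (hC : ∀ k, σ.symm (Sum.inl k) = Sum.inl k ∨ σ.symm (Sum.inl k) = Sum.inr k) :
    ∃ p, g p = σ := by
  classical
  set S : Finset (Fin n) := Finset.univ.filter (fun i => σ (Sum.inl i) = Sum.inl i) with hSdef
  have hmemS : ∀ i, i ∈ S ↔ σ (Sum.inl i) = Sum.inl i := by simp [hSdef]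
  have hnotS : ∀ i, i ∉ S → σ (Sum.inr i) = Sum.inl i := by
    intro i hi
    rcases hC i with h | h
    · rw [Equiv.symm_apply_eq] at h
      exact absurd ((hmemS i).2 h.symm) hi
    · rw [Equiv.symm_apply_eq] at h
      exact h.symm
  have hS_inr : ∀ i ∈ S, ∃ j, σ (Sum.inr i) = Sum.inr j := by
    intro i hi
    cases h : σ (Sum.inr i) with
    | inl k =>
      exfalso
      have hsym : σ.symm (Sum.inl k) = Sum.inr i := by rw [Equiv.symm_apply_eq, h]
      rcases hC k with h' | h'
      · rw [hsym] at h'; cases h'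
      · rw [hsym] at h'
        obtain rfl : i = k := Sum.inr.inj h'
        have h1 := (hmemS i).1 hi
        simpa using σ.injective (h1.trans h.symm)
    | inr j => exact ⟨j, rfl⟩
  have hnotS_inl : ∀ i, i ∉ S → ∃ j, σ (Sum.inl i) = Sum.inr j := by
    intro i hi
    cases h : σ (Sum.inl i) with
    | inl k =>
      exfalso
      have hsym : σ.symm (Sum.inl k) = Sum.inl i := by rw [Equiv.symm_apply_eq, h]
      rcases hC k with h' | h'
      · rw [hsym] at h'
        obtain rfl : i = k := Sum.inl.inj h'
        exact hi ((hmemS i).2 h)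
      · rw [hsym] at h'; cases h'
    | inr j => exact ⟨j, rfl⟩
  have ht : ∀ i, ∃ j, σ (if i ∈ S then Sum.inr i else Sum.inl i) = Sum.inr j := by
    intro i
    by_cases hi : i ∈ S
    · simpa [hi] using hS_inr i hi
    · simpa [hi] using hnotS_inl i hi
  set t : Fin n → Fin n := fun i => (ht i).choose with htdef
  have htspec : ∀ i, σ (if i ∈ S then Sum.inr i else Sum.inl i) = Sum.inr (t i) :=
    fun i => (ht i).choose_spec
  have htinj : Function.Injective t := by
    intro i j hij
    have h1 : σ (if i ∈ S then Sum.inr i else Sum.inl i)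
        = σ (if j ∈ S then Sum.inr j else Sum.inl j) := by
      rw [htspec i, htspec j, hij]
    have h2 := σ.injective h1
    by_cases hi : i ∈ S <;> by_cases hj : j ∈ S <;>
      simp [hi, hj] at h2 <;> exact h2
  refine ⟨(S, Equiv.ofBijective t (Finite.injective_iff_bijective.mp htinj)), ?_⟩
  apply Equiv.ext
  intro x
  cases x with
  | inl i =>
    by_cases hi : i ∈ S
    · rw [g_inl, if_pos hi, (hmemS i).1 hi]
    · have h := htspec i
      rw [if_neg hi] at h
      rw [g_inl, if_neg hi, h]
      rfl
  | inr i =>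
    by_cases hi : i ∈ S
    · have h := htspec i
      rw [if_pos hi] at h
      rw [g_inr, if_pos hi, h]
      rfl
    · rw [g_inr, if_neg hi, hnotS i hi]

end Stmt7


open Stmt7 in
/-- The permanent of the 2n×2n block matrix [[I,A],[I,A]] is 2^n · Perm(A). -/
theorem stmt7 {n : ℕ} {R : Type*} [CommRing R] (A : Matrix (Fin n) (Fin n) R) :
    perm (Matrix.fromBlocks 1 A 1 A) = 2 ^ n * perm A := by
  classical
  set M := Matrix.fromBlocks (1 : Matrix (Fin n) (Fin n) R) A 1 A with hM
  have h0 : ∀ σ ∈ (Finset.univ : Finset (Equiv.Perm (Fin n ⊕ Fin n))),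
      σ ∉ Finset.univ.image g → (∏ x, M x (σ x)) = 0 := by
    intro σ _ hσ
    have hnoC : ¬ ∀ k, σ.symm (Sum.inl k) = Sum.inl k ∨ σ.symm (Sum.inl k) = Sum.inr k := by
      intro hC
      obtain ⟨p, hp⟩ := exists_preimage σ hC
      exact hσ (Finset.mem_image.2 ⟨p, Finset.mem_univ p, hp⟩)
    push_neg at hnoC
    obtain ⟨k, hk1, hk2⟩ := hnoC
    refine Finset.prod_eq_zero (Finset.mem_univ (σ.symm (Sum.inl k))) ?_
    rw [Equiv.apply_symm_apply]
    cases hx : σ.symm (Sum.inl k) with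
    | inl j =>
      rw [hx] at hk1
      have hjk : j ≠ k := fun h => hk1 (by rw [h])
      simp [hM, Matrix.one_apply_ne hjk]
    | inr j =>
      rw [hx] at hk2
      have hjk : j ≠ k := fun h => hk2 (by rw [h])
      simp [hM, Matrix.one_apply_ne hjk]
  have key : perm M = ∑ p : Finset (Fin n) × Equiv.Perm (Fin n), ∏ x, M x (g p x) := by
    rw [perm, ← Finset.sum_subset (Finset.subset_univ (Finset.univ.image g)) h0,
      Finset.sum_image (fun x _ y _ h => g_injective h)]
  rw [key]
  have hterm : ∀ S : Finset (Fin n), ∀ τ : Equiv.Perm (Fin n),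
      (∏ x, M x (g (S, τ) x)) = ∏ i, A i (τ i) := by
    intro S τ
    rw [Fintype.prod_sum_type]
    have h1 : ∀ i, M (Sum.inl i) (g (S, τ) (Sum.inl i))
        = (if i ∈ S then (1 : R) else A i (τ i)) := by
      intro i
      by_cases hi : i ∈ S <;> simp [hM, hi, Matrix.one_apply]
    have h2 : ∀ i, M (Sum.inr i) (g (S, τ) (Sum.inr i))
        = (if i ∈ S then A i (τ i) else (1 : R)) := by
      intro i
      by_cases hi : i ∈ S <;> simp [hM, hi, Matrix.one_apply]
    simp_rw [h1, h2, ← Finset.prod_mul_distrib]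
    refine Finset.prod_congr rfl fun i _ => ?_
    by_cases hi : i ∈ S <;> simp [hi]
  rw [Fintype.sum_prod_type]
  simp_rw [hterm]
  rw [Finset.sum_const]
  simp [perm, Fintype.card_finset, mul_comm]
end

section
/- Let G be a connected graph with |E(G)| = k(|V(G)|−1). If k+1 is composite and |V(G)| > 2, then the permanent of any kDSI matrix of G is congruent to 0 modulo k+1. -/
/-- Entry of the signed incidence matrix of an oriented multigraph with edge-tail map `s`
and edge-head map `t`: +1 if the edge leaves the vertex, −1 if it enters, 0 otherwise. -/
def inc {V E : Type*} [DecidableEq V] (s t : E → V) (v : V) (e : E) : ℤ :=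
  (if s e = v then 1 else 0) - (if t e = v then 1 else 0)

open scoped Nat

theorem Subgroup.card_dvd_sum_of_mul_right_invariant {G R : Type*} [Group G] [Fintype G]
    [CommSemiring R] (H : Subgroup G) [Fintype H] (f : G → R)
    (hf : ∀ σ, ∀ h ∈ H, f (σ * h) = f σ) :
    (Fintype.card H : R) ∣ ∑ σ, f σ := by
  classical
  let e : H × (Set.univ : Set (G ⧸ H)) ≃ G :=
    (QuotientGroup.preimageMkEquivSubgroupProdSet H Set.univ).symm.trans
      (Equiv.subtypeUnivEquiv fun _ => trivial)
  have hfe : ∀ x, f (e x) = f x.2.1.out := fun x => hf _ _ x.1.2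
  rw [← e.sum_comp, Fintype.sum_prod_type_right]
  simp only [hfe, Finset.sum_const, Finset.card_univ, nsmul_eq_mul]
  exact Finset.dvd_sum fun _ _ => dvd_mul_right _ _

def Equiv.Perm.prodCongrLeftHom (ι κ : Type*) : (κ → Equiv.Perm ι) →* Equiv.Perm (ι × κ) where
  toFun := Equiv.prodCongrLeft
  map_one' := by ext <;> rfl
  map_mul' _ _ := by ext <;> rfl

theorem Equiv.Perm.prodCongrLeftHom_injective (ι κ : Type*) :
    Function.Injective (Equiv.Perm.prodCongrLeftHom ι κ) := by
  intro π π' h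
  funext v
  ext i
  exact congrArg Prod.fst (Equiv.congr_fun h (i, v))

theorem factorial_pow_dvd_perm_of_rows_replicated {ι κ R : Type*} [Fintype ι] [DecidableEq ι]
    [Fintype κ] [DecidableEq κ] [CommRing R] (B : Matrix κ (ι × κ) R) :
    (((Fintype.card ι)! ^ Fintype.card κ : ℕ) : R) ∣ perm (Matrix.of fun x j => B x.2 j) := by
  set g := Equiv.Perm.prodCongrLeftHom ι κ
  have hcard : Fintype.card g.range = (Fintype.card ι)! ^ Fintype.card κ := by
    rw [Fintype.card_coeSort_range (Equiv.Perm.prodCongrLeftHom_injective ι κ),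
      Fintype.card_fun, Fintype.card_perm]
  rw [← hcard]
  refine g.range.card_dvd_sum_of_mul_right_invariant _ ?_
  rintro σ _ ⟨π, rfl⟩
  -- `g π` fixes the second coordinate, which is all a row of the matrix depends on.
  exact Equiv.prod_comp (g π) fun x => B x.2 (σ x)

theorem Nat.succ_dvd_factorial_sq_of_not_prime {k : ℕ} (hk : ¬ (k + 1).Prime) :
    k + 1 ∣ k ! ^ 2 := by
  rcases Nat.eq_zero_or_pos k with rfl | hk0
  · simp
  obtain ⟨a, ⟨b, hab⟩, ha2, hak⟩ := Nat.exists_dvd_of_not_prime2 (by omega) hk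
  have hb2 : 2 ≤ b := by nlinarith
  have hbk : b < k + 1 := by nlinarith
  rw [hab, sq]
  exact mul_dvd_mul (Nat.dvd_factorial (by omega) (by omega))
    (Nat.dvd_factorial (by omega) (by omega))

theorem stmt9_general {V E : Type*} [Fintype V] [DecidableEq V]
    (s t : E → V)
    (k : ℕ) (hcomp : ¬ Nat.Prime (k + 1)) (hV : 2 < Fintype.card V)
    (w : V) (ρ : (Fin k × {v : V // v ≠ w}) ≃ E) :
    perm (Matrix.of fun i j : Fin k × {v : V // v ≠ w} => inc s t i.2.1 (ρ j))
      ≡ 0 [ZMOD ((k : ℤ) + 1)] := by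
  rw [Int.modEq_zero_iff_dvd]
  have hrows : Fintype.card {v : V // v ≠ w} = Fintype.card V - 1 := by
    rw [Fintype.card_subtype_compl, Fintype.card_subtype_eq]
  have hdvd : k + 1 ∣ k ! ^ Fintype.card {v : V // v ≠ w} :=
    (Nat.succ_dvd_factorial_sq_of_not_prime hcomp).trans (pow_dvd_pow _ (by omega))
  have hperm := factorial_pow_dvd_perm_of_rows_replicated (ι := Fin k)
    (fun (v : {v : V // v ≠ w}) j => inc s t v.1 (ρ j))
  rw [Fintype.card_fin] at hperm
  exact (Int.natCast_dvd_natCast.mpr hdvd).trans hperm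

/-- For a connected loopless multigraph G with |E| = k(|V|−1), k+1 composite and |V| > 2,
the permanent of any kDSI matrix of G is 0 modulo k+1. -/
theorem stmt9 {V E : Type*} [Fintype V] [Fintype E] [DecidableEq V] [DecidableEq E]
    (s t : E → V) (hloop : ∀ e, s e ≠ t e)
    (hconn : (SimpleGraph.fromRel (fun u v => ∃ e, s e = u ∧ t e = v)).Connected)
    (k : ℕ) (hk : 0 < k) (hcomp : ¬ Nat.Prime (k + 1)) (hV : 2 < Fintype.card V)
    (hcard : Fintype.card E = k * (Fintype.card V - 1))
    (w : V) (ρ : (Fin k × {v : V // v ≠ w}) ≃ E) :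
    perm (Matrix.of fun i j : Fin k × {v : V // v ≠ w} => inc s t i.2.1 (ρ j))
      ≡ 0 [ZMOD ((k : ℤ) + 1)] :=
  stmt9_general s t k hcomp hV w ρ
end

section
/- Let G be a connected graph with |E(G)| = k(|V(G)|−1), with a fixed orientation. Then the permanent of the kDSI matrix of G modulo k+1 is invariant under the choice of special vertex (for all k, including the degenerate case |V(G)| = 2). -/
/-!
The columns of the signed incidence matrix sum to zero, so the row of `u` is minus the sum of
the rows of the other vertices. Negate the `k` copies of row `u` in the kDSI matrix `D_v` and
expand the permanent multilinearly in them: each copy becomes the row of some vertex `y ≠ u`.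
If every copy becomes the row of `v`, the result is `D_u` with its rows relabelled; otherwise
some row occurs `k + 1` times, and a permanent with `r` equal rows is divisible by `r!`. Hence
`(-1)^k perm D_v ≡ perm D_u [ZMOD k + 1]`. The sign does not matter: `k!` divides `perm D_v`
(its rows come in `k` equal copies), and `k + 1` divides `2 * k!` when `k` is odd.
-/

open Finset
open scoped Nat

theorem Subgroup.natCard_dvd_sum_of_mul_right_invariant {G M : Type*} [Group G] [Fintype G]
    [Semiring M] (H : Subgroup G) (F : G → M) (hF : ∀ g, ∀ h ∈ H, F (g * h) = F g) :
    (Nat.card H : M) ∣ ∑ g, F g := by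
  classical
  rw [← sum_fiberwise univ (QuotientGroup.mk : G → G ⧸ H) F]
  refine dvd_sum fun q _ => ?_
  have hconst : ∀ g ∈ ({g : G | (g : G ⧸ H) = q} : Finset G), F g = F q.out := by
    intro g hg
    have hmem : q.out⁻¹ * g ∈ H := QuotientGroup.eq.mp (by simp [(mem_filter.mp hg).2])
    rw [← hF q.out _ hmem, mul_inv_cancel_left]
  have hcard : #{g : G | (g : G ⧸ H) = q} = Nat.card H := by
    simpa [Nat.card_eq_fintype_card, ← Fintype.card_subtype] using
      QuotientGroup.card_preimage_mk H {q}
  rw [sum_congr rfl hconst, sum_const, nsmul_eq_mul, hcard]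
  exact dvd_mul_right _ _

section Permanent

variable {R : Type*} [CommRing R] {l m : Type*} [Fintype l] [DecidableEq l]
  [Fintype m] [DecidableEq m]

theorem perm_submatrix_equiv (A : Matrix m m R) (e f : l ≃ m) :
    perm (A.submatrix e f) = perm A := by
  refine Fintype.sum_equiv
    ⟨fun σ => (e.symm.trans σ).trans f, fun τ => (e.trans τ).trans f.symm,
      fun σ => by ext; simp, fun τ => by ext; simp⟩ _ _ fun σ => ?_
  exact Fintype.prod_equiv e _ _ fun i => by simp

theorem perm_diagonal_mul (d : m → R) (A : Matrix m m R) :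
    perm (Matrix.diagonal d * A) = (∏ i, d i) * perm A := by
  simp only [perm, Matrix.diagonal_mul, prod_mul_distrib, mul_sum]

theorem perm_eq_sum_perm_of_row_eq_sum {ι : Type*} [Fintype ι] (A : Matrix m m R)
    (p : m → Prop) [DecidablePred p] (g : {i // p i} → ι → m → R)
    (hA : ∀ (i : {i // p i}) j, A i j = ∑ y, g i y j) :
    perm A = ∑ f : {i // p i} → ι,
      perm (Matrix.of fun i j => if h : p i then g ⟨i, h⟩ (f ⟨i, h⟩) j else A i j) := by
  unfold perm
  rw [sum_comm]
  refine Fintype.sum_congr _ _ fun σ => ?_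
  simp only [← Fintype.prod_subtype_mul_prod_subtype p, hA, Fintype.prod_sum, sum_mul,
    Matrix.of_apply]
  refine Fintype.sum_congr _ _ fun f => ?_
  congr 1 <;> exact Fintype.prod_congr _ _ fun i => by simp [i.2]

theorem factorial_card_dvd_perm (A : Matrix m m R) (S : Finset m)
    (hS : ∀ i ∈ S, ∀ i' ∈ S, A i = A i') : ((#S)! : R) ∣ perm A := by
  let H := (Equiv.Perm.ofSubtype : Equiv.Perm S →* Equiv.Perm m).range
  have hH : Nat.card H = (#S)! := by
    rw [Nat.card_congr (MonoidHom.ofInjective Equiv.Perm.ofSubtype_injective).toEquiv.symm,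
      Nat.card_perm, Nat.card_eq_fintype_card, Fintype.card_coe]
  rw [← hH]
  refine H.natCard_dvd_sum_of_mul_right_invariant _ ?_
  rintro σ _ ⟨π, rfl⟩
  have hrow : ∀ i, A (Equiv.Perm.ofSubtype π i) = A i := by
    intro i
    by_cases hi : i ∈ S
    · rw [Equiv.Perm.ofSubtype_apply_of_mem π hi]
      exact hS _ (π _).2 _ hi
    · rw [Equiv.Perm.ofSubtype_apply_of_not_mem π hi]
  calc ∏ i, A i ((σ * Equiv.Perm.ofSubtype π) i)
      = ∏ i, A (Equiv.Perm.ofSubtype π i) (σ (Equiv.Perm.ofSubtype π i)) := by simp [hrow]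
    _ = ∏ i, A i (σ i) := Equiv.prod_comp _ fun i => A i (σ i)

end Permanent

theorem natCast_succ_dvd_factorial_mul_one_sub_neg_one_pow {R : Type*} [CommRing R] (k : ℕ) :
    ((k + 1 : ℕ) : R) ∣ k ! * (1 - (-1) ^ k) := by
  rcases Nat.even_or_odd k with hk | ⟨m, rfl⟩
  · simp [hk.neg_one_pow]
  · have hm : (m + 1) * 2 ∣ (2 * m + 1)! * 2 :=
      mul_dvd_mul (Nat.dvd_factorial m.succ_pos (by omega)) dvd_rfl
    rw [Odd.neg_one_pow ⟨m, rfl⟩, show 2 * m + 1 + 1 = (m + 1) * 2 by ring]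
    simpa [show (1 : R) - -1 = 2 by ring] using Nat.cast_dvd_cast (α := R) hm

section kDSI

variable {R : Type*} [CommRing R] {V E : Type*} [Fintype V] [DecidableEq V] {k : ℕ}

def kDSI (X : Matrix V E R) (w : V) (ρ : Fin k × {x // x ≠ w} ≃ E) :
    Matrix (Fin k × {x // x ≠ w}) (Fin k × {x // x ≠ w}) R :=
  X.submatrix (fun i => i.2) ρ

theorem perm_kDSI_eq (X : Matrix V E R) (w : V) (ρ ρ' : Fin k × {x // x ≠ w} ≃ E) :
    perm (kDSI X w ρ) = perm (kDSI X w ρ') := by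
  rw [← perm_submatrix_equiv (kDSI X w ρ') (Equiv.refl _) (ρ.trans ρ'.symm)]
  congr
  ext i j
  simp [kDSI]

theorem factorial_dvd_perm_kDSI [Nontrivial V] (X : Matrix V E R) (w : V)
    (ρ : Fin k × {x // x ≠ w} ≃ E) : (k ! : R) ∣ perm (kDSI X w ρ) := by
  obtain ⟨x, hx⟩ := exists_ne w
  have := factorial_card_dvd_perm (kDSI X w ρ) (univ.image fun c : Fin k => (c, ⟨x, hx⟩))
    (by simp only [mem_image]; rintro _ ⟨c, -, rfl⟩ _ ⟨c', -, rfl⟩; rfl)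
  rwa [card_image_of_injective _ (Prod.mk_left_injective _), card_univ, Fintype.card_fin] at this

theorem neg_apply_eq_sum_subtype_ne (X : Matrix V E R) (hX : ∀ j, ∑ x, X x j = 0) (u : V)
    (j : E) :
    -X u j = ∑ y : {x // x ≠ u}, X y j := by
  rw [neg_eq_iff_add_eq_zero, ← hX j, Fintype.sum_eq_add_sum_subtype_ne _ u, add_comm]

def relabelRows {u v : V} (huv : u ≠ v)
    (f : {i : Fin k × {x // x ≠ v} // i.2 = ⟨u, huv⟩} → {x // x ≠ u})
    (i : Fin k × {x // x ≠ v}) : V :=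
  if h : i.2 = ⟨u, huv⟩ then f ⟨i, h⟩ else i.2

theorem neg_one_pow_mul_perm_kDSI_eq_sum (X : Matrix V E R) (hX : ∀ j, ∑ x, X x j = 0)
    {u v : V} (huv : u ≠ v) (ρv : Fin k × {x // x ≠ v} ≃ E) :
    (-1) ^ k * perm (kDSI X v ρv) = ∑ f, perm (X.submatrix (relabelRows huv f) ρv) := by
  let d : Fin k × {x // x ≠ v} → R := fun i => if i.2 = ⟨u, huv⟩ then -1 else 1
  have hd : ∏ i, d i = (-1) ^ k := by
    simp [d, Fintype.prod_prod_type]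
  rw [← hd, ← perm_diagonal_mul, perm_eq_sum_perm_of_row_eq_sum _ (fun i => i.2 = ⟨u, huv⟩)
    fun _ (y : {x // x ≠ u}) j => X y (ρv j)]
  · refine Fintype.sum_congr _ _ fun f => congrArg perm ?_
    ext i j
    by_cases h : i.2 = ⟨u, huv⟩ <;> simp [relabelRows, d, kDSI, h]
  · rintro ⟨⟨c, x⟩, rfl : x = ⟨u, huv⟩⟩ j
    simp [d, kDSI, neg_apply_eq_sum_subtype_ne X hX]

theorem perm_submatrix_relabelRows_const (X : Matrix V E R) {u v : V} (huv : u ≠ v)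
    (ρu : Fin k × {x // x ≠ u} ≃ E) (ρv : Fin k × {x // x ≠ v} ≃ E) :
    perm (X.submatrix (relabelRows huv fun _ => ⟨v, huv.symm⟩) ρv) = perm (kDSI X u ρu) := by
  let e : {x // x ≠ v} ≃ {x // x ≠ u} :=
    (Equiv.swap u v).subtypeEquiv fun a => by simp [Equiv.swap_apply_eq_iff]
  rw [← perm_submatrix_equiv (kDSI X u ρu) ((Equiv.refl _).prodCongr e) (ρv.trans ρu.symm)]
  refine congrArg perm ?_
  ext i j
  by_cases h : i.2 = ⟨u, huv⟩
  · simp [relabelRows, e, kDSI, h]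
  · simp [relabelRows, e, kDSI, h,
      Equiv.swap_apply_of_ne_of_ne (fun h' => h (Subtype.ext h')) i.2.2]

theorem succ_dvd_perm_submatrix_relabelRows (X : Matrix V E R) {u v : V} (huv : u ≠ v)
    (ρv : Fin k × {x // x ≠ v} ≃ E)
    (f : {i : Fin k × {x // x ≠ v} // i.2 = ⟨u, huv⟩} → {x // x ≠ u})
    (i₀ : {i : Fin k × {x // x ≠ v} // i.2 = ⟨u, huv⟩}) (hi₀ : (f i₀ : V) ≠ v) :
    ((k + 1 : ℕ) : R) ∣ perm (X.submatrix (relabelRows huv f) ρv) := by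
  let S := insert i₀.1 (univ.image fun c : Fin k => (c, (⟨f i₀, hi₀⟩ : {x // x ≠ v})))
  have hS : #S = k + 1 := by
    rw [card_insert_of_notMem, card_image_of_injective _ (Prod.mk_left_injective _),
      Finset.card_univ, Fintype.card_fin]
    simp only [mem_image]
    rintro ⟨c, -, hc⟩
    exact (f i₀).2 (congrArg Subtype.val ((congrArg Prod.snd hc).trans i₀.2))
  have hlabel : ∀ i ∈ S, relabelRows huv f i = f i₀ := by
    simp only [S, mem_insert, mem_image]
    rintro _ (rfl | ⟨c, -, rfl⟩)
    · simp [relabelRows, i₀.2]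
    · simp [relabelRows, (f i₀).2]
  have := factorial_card_dvd_perm (X.submatrix (relabelRows huv f) ρv) S fun i hi i' hi' => by
    ext j; simp [hlabel i hi, hlabel i' hi']
  rw [hS] at this
  exact (Nat.cast_dvd_cast (Nat.dvd_factorial k.succ_pos le_rfl)).trans this

theorem dvd_perm_kDSI_sub_neg_one_pow_mul (X : Matrix V E R) (hX : ∀ j, ∑ x, X x j = 0)
    {u v : V} (huv : u ≠ v) (ρu : Fin k × {x // x ≠ u} ≃ E) (ρv : Fin k × {x // x ≠ v} ≃ E) :
    ((k + 1 : ℕ) : R) ∣ perm (kDSI X u ρu) - (-1) ^ k * perm (kDSI X v ρv) := by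
  let f₀ : {i : Fin k × {x // x ≠ v} // i.2 = ⟨u, huv⟩} → {x // x ≠ u} :=
    fun _ => ⟨v, huv.symm⟩
  rw [neg_one_pow_mul_perm_kDSI_eq_sum X hX huv, ← add_sum_erase _ _ (mem_univ f₀),
    perm_submatrix_relabelRows_const X huv ρu ρv, sub_add_cancel_left, dvd_neg]
  refine dvd_sum fun f hf => ?_
  obtain ⟨i₀, hi₀⟩ := Function.ne_iff.mp (ne_of_mem_erase hf)
  exact succ_dvd_perm_submatrix_relabelRows X huv ρv f i₀ fun h =>
    hi₀ (Subtype.ext h)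

theorem dvd_perm_kDSI_sub (X : Matrix V E R) (hX : ∀ j, ∑ x, X x j = 0) (u v : V)
    (ρu : Fin k × {x // x ≠ u} ≃ E) (ρv : Fin k × {x // x ≠ v} ≃ E) :
    ((k + 1 : ℕ) : R) ∣ perm (kDSI X u ρu) - perm (kDSI X v ρv) := by
  rcases eq_or_ne u v with rfl | huv
  · simp [perm_kDSI_eq X u ρu ρv]
  have : Nontrivial V := ⟨⟨u, v, huv⟩⟩
  obtain ⟨c, hc⟩ := factorial_dvd_perm_kDSI X v ρv
  have hsign := natCast_succ_dvd_factorial_mul_one_sub_neg_one_pow (R := R) k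
  calc ((k + 1 : ℕ) : R) ∣ (perm (kDSI X u ρu) - (-1) ^ k * perm (kDSI X v ρv))
        - k ! * (1 - (-1) ^ k) * c :=
      dvd_sub (dvd_perm_kDSI_sub_neg_one_pow_mul X hX huv ρu ρv) (hsign.mul_right c)
    _ = perm (kDSI X u ρu) - perm (kDSI X v ρv) := by rw [hc]; ring

end kDSI

theorem sum_inc {V E : Type*} [Fintype V] [DecidableEq V] (s t : E → V) (e : E) :
    ∑ x, inc s t x e = 0 := by
  simp [inc, sum_sub_distrib]

theorem stmt11_general {V E : Type*} [Fintype V] [DecidableEq V]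
    (s t : E → V)
    (k : ℕ)
    (u v : V)
    (ρu : (Fin k × {x : V // x ≠ u}) ≃ E) (ρv : (Fin k × {x : V // x ≠ v}) ≃ E) :
    perm (Matrix.of fun i j : Fin k × {x : V // x ≠ u} => inc s t i.2.1 (ρu j))
      ≡ perm (Matrix.of fun i j : Fin k × {x : V // x ≠ v} => inc s t i.2.1 (ρv j))
      [ZMOD ((k : ℤ) + 1)] := by
  refine Int.modEq_iff_dvd.mpr ?_
  exact_mod_cast dvd_perm_kDSI_sub (Matrix.of (inc s t)) (sum_inc s t) v u ρv ρu

/-- For a connected loopless multigraph G with |E| = k(|V|−1) and a fixed orientation,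
the permanent of the kDSI matrix modulo k+1 is invariant under the choice of special
vertex (for all k, including the degenerate case |V(G)| = 2). -/
theorem stmt11 {V E : Type*} [Fintype V] [Fintype E] [DecidableEq V] [DecidableEq E]
    (s t : E → V) (hloop : ∀ e, s e ≠ t e)
    (hconn : (SimpleGraph.fromRel (fun a b => ∃ e, s e = a ∧ t e = b)).Connected)
    (k : ℕ) (hcard : Fintype.card E = k * (Fintype.card V - 1))
    (u v : V)
    (ρu : (Fin k × {x : V // x ≠ u}) ≃ E) (ρv : (Fin k × {x : V // x ≠ v}) ≃ E) :
    perm (Matrix.of fun i j : Fin k × {x : V // x ≠ u} => inc s t i.2.1 (ρu j))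
      ≡ perm (Matrix.of fun i j : Fin k × {x : V // x ≠ v} => inc s t i.2.1 (ρv j))
      [ZMOD ((k : ℤ) + 1)] :=
  stmt11_general s t k u v ρu ρv
end

section
/- Let Γ be a connected 2k-regular multigraph. Define the graph permanent of a decompletion Γ−v as ±Perm(M) mod (k+1), where M is a kDSI matrix of Γ−v, taken as a residue in [0, (k+1)/2]. Then all decompletions of Γ (over all choices of deleted vertex) have equal graph permanent. -/
open Finset

set_option linter.unusedSectionVars false
set_option maxHeartbeats 1000000

namespace GP

variable {ι ι' R : Type*} [DecidableEq ι] [Fintype ι] [DecidableEq ι'] [Fintype ι'] [CommRing R]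

/-- Permanent is invariant under arbitrary independent row/column reindexing. -/
theorem perm_submatrix (A : Matrix ι ι R) (e f : ι' ≃ ι) :
    perm (A.submatrix e f) = perm A := by
  unfold perm
  have key : ∀ σ : Equiv.Perm ι', ∏ i, (A.submatrix e f) i (σ i)
      = ∏ i, A i (((e.symm.trans σ).trans f) i) := by
    intro σ
    rw [← Equiv.prod_comp e (fun i => A i (((e.symm.trans σ).trans f) i))]
    simp [Matrix.submatrix_apply]
  rw [Finset.sum_congr rfl (fun σ _ => key σ)]
  exact Fintype.sum_bijective (fun σ : Equiv.Perm ι' => (e.symm.trans σ).trans f)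
    (Equiv.bijective ⟨fun σ => (e.symm.trans σ).trans f,
      fun τ => (e.trans τ).trans f.symm, by intro σ; ext i; simp, by intro τ; ext i; simp⟩)
    _ _ (fun σ => rfl)

theorem perm_updateRow (A : Matrix ι ι R) (i : ι) (r : ι → R) :
    perm (A.updateRow i r) = ∑ σ : Equiv.Perm ι, r (σ i) * ∏ j ∈ univ.erase i, A j (σ j) := by
  unfold perm
  refine Finset.sum_congr rfl (fun σ _ => ?_)
  rw [← Finset.mul_prod_erase univ _ (Finset.mem_univ i)]
  congr 1
  · simp
  · exact Finset.prod_congr rfl (fun j hj => by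
      rw [Matrix.updateRow_ne (Finset.ne_of_mem_erase hj)])

theorem perm_updateRow_sum {γ : Type*} (A : Matrix ι ι R) (i : ι) (S : Finset γ) (r : γ → ι → R) :
    perm (A.updateRow i (fun c => ∑ x ∈ S, r x c)) = ∑ x ∈ S, perm (A.updateRow i (r x)) := by
  simp only [perm_updateRow, Finset.sum_mul, Finset.sum_comm (s := S)]

theorem perm_updateRow_neg (A : Matrix ι ι R) (i : ι) (r : ι → R) :
    perm (A.updateRow i (fun c => - r c)) = - perm (A.updateRow i r) := by
  simp [perm_updateRow, Finset.sum_neg_distrib]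


variable {ι U : Type*} [DecidableEq ι] [Fintype ι] [DecidableEq U] [Fintype U]

/-- Permutations with prescribed fiber behaviour decompose as a product of bijections
between fibers. -/
def fiberEquiv (p g : ι → U) :
    {σ : Equiv.Perm ι // ∀ j, p (σ j) = g j} ≃ ∀ x : U, ({j // g j = x} ≃ {i // p i = x}) where
  toFun σ x := Equiv.subtypeEquiv σ.1 (fun j => by
    constructor
    · rintro rfl; exact σ.2 j
    · intro h; rw [← σ.2 j, h])
  invFun F := ⟨(Equiv.sigmaFiberEquiv g).symm.trans
      ((Equiv.sigmaCongrRight F).trans (Equiv.sigmaFiberEquiv p)), by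
    intro j
    exact (F (g j) ⟨j, rfl⟩).2⟩
  left_inv σ := by
    apply Subtype.ext
    ext j
    rfl
  right_inv F := by
    funext x
    ext ⟨j, hj⟩
    subst hj
    rfl

theorem card_fiber_perm (p g : ι → U)
    (hg : ∀ x, (univ.filter fun j => g j = x).card = (univ.filter fun i => p i = x).card) :
    (univ.filter fun σ : Equiv.Perm ι => (fun j => p (σ j)) = g).card
      = ∏ x : U, ((univ.filter fun i => p i = x).card).factorial := by
  classical
  have h1 : (univ.filter fun σ : Equiv.Perm ι => (fun j => p (σ j)) = g).card
      = Fintype.card {σ : Equiv.Perm ι // ∀ j, p (σ j) = g j} := by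
    rw [Fintype.card_subtype]
    congr 1
    apply Finset.filter_congr
    intro σ _
    rw [funext_iff]
  rw [h1, Fintype.card_congr (fiberEquiv p g), Fintype.card_pi]
  refine Finset.prod_congr rfl (fun x _ => ?_)
  have hcard : Fintype.card {j // g j = x} = Fintype.card {i // p i = x} := by
    rw [Fintype.card_subtype, Fintype.card_subtype]; exact hg x
  rw [Fintype.card_equiv (Fintype.equivOfCardEq hcard), Fintype.card_subtype, hg x]

/-- Master decomposition: the permanent of a matrix whose rows only depend on `p i`
is a sum over "fiber-preserving assignments". -/
theorem master {R : Type*} [CommRing R] (p : ι → U) (w : U → ι → R) :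
    perm (Matrix.of fun i j : ι => w (p i) j)
      = ∑ g ∈ univ.filter (fun g : ι → U =>
          ∀ x, (univ.filter fun j => g j = x).card = (univ.filter fun i => p i = x).card),
          (∏ x : U, (((univ.filter fun i => p i = x).card).factorial : R)) * ∏ j, w (g j) j := by
  classical
  unfold perm
  have step1 : ∀ σ : Equiv.Perm ι, ∏ i, (Matrix.of fun i j : ι => w (p i) j) i (σ i)
      = ∏ i, w (p (σ.symm i)) i := by
    intro σ
    rw [← Equiv.prod_comp σ (fun i => w (p (σ.symm i)) i)]
    simp
  rw [Finset.sum_congr rfl (fun σ _ => step1 σ)]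
  rw [Fintype.sum_equiv (Equiv.inv (Equiv.Perm ι))
    (fun σ => ∏ i, w (p (σ.symm i)) i) (fun σ => ∏ i, w (p (σ i)) i) (fun σ => rfl)]
  -- now group by g = p ∘ σ
  have := Finset.sum_comp (s := (univ : Finset (Equiv.Perm ι)))
    (fun g : ι → U => ∏ j, w (g j) j) (fun σ => fun j => p (σ j))
  rw [this]
  -- image = the filter set
  have himage : Finset.image (fun (σ : Equiv.Perm ι) => fun j => p (σ j)) univ
      = univ.filter (fun g : ι → U =>
          ∀ x, (univ.filter fun j => g j = x).card = (univ.filter fun i => p i = x).card) := by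
    ext g
    simp only [Finset.mem_image, Finset.mem_filter, Finset.mem_univ, true_and]
    constructor
    · rintro ⟨σ, -, rfl⟩
      intro x
      refine Finset.card_bij (fun j _ => σ j) ?_ ?_ ?_
      · intro j hj; simp only [Finset.mem_filter, Finset.mem_univ, true_and] at hj ⊢; exact hj
      · intro a _ b _ h; exact σ.injective h
      · intro i hi
        simp only [Finset.mem_filter, Finset.mem_univ, true_and] at hi ⊢
        exact ⟨σ.symm i, by simpa using hi, by simp⟩
    · intro hg
      have hcard : ∀ x, Fintype.card {j // g j = x} = Fintype.card {i // p i = x} := by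
        intro x; rw [Fintype.card_subtype, Fintype.card_subtype]; exact hg x
      obtain ⟨σ, hσ⟩ : ∃ σ : Equiv.Perm ι, ∀ j, p (σ j) = g j :=
        ⟨((fiberEquiv p g).symm (fun x => Fintype.equivOfCardEq (hcard x))).1,
         ((fiberEquiv p g).symm (fun x => Fintype.equivOfCardEq (hcard x))).2⟩
      exact ⟨σ, funext hσ⟩
  rw [himage]
  refine Finset.sum_congr rfl (fun g hg => ?_)
  simp only [Finset.mem_filter, Finset.mem_univ, true_and] at hg
  rw [card_fiber_perm p g hg]
  rw [nsmul_eq_mul]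
  push_cast
  rfl

/-- If `S.card` many rows of `A` are all equal, then `S.card !` divides the permanent. -/
theorem factorial_dvd_perm (A : Matrix ι ι ℤ) (S : Finset ι) (r₀ : ι → ℤ)
    (h : ∀ i ∈ S, A i = r₀) :
    ((S.card).factorial : ℤ) ∣ perm A := by
  classical
  set p : ι → Option {i // i ∉ S} := fun i => if h : i ∈ S then none else some ⟨i, h⟩ with hp
  set w : Option {i // i ∉ S} → ι → ℤ := fun o => o.elim r₀ (fun i' => A i'.1) with hw
  have hA : A = Matrix.of fun i j : ι => w (p i) j := by
    ext i j
    by_cases hi : i ∈ S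
    · simp [hp, hw, hi, h i hi]
    · simp [hp, hw, hi]
  rw [hA, master]
  apply Finset.dvd_sum
  intro g _
  apply Dvd.dvd.mul_right
  have : S.card = (univ.filter fun i => p i = (none : Option {i // i ∉ S})).card := by
    congr 1
    ext i
    by_cases hi : i ∈ S <;> simp [hp, hi]
  rw [this]
  exact Finset.dvd_prod_of_mem _ (Finset.mem_univ none)


variable {V E : Type*} [Fintype V] [Fintype E] [DecidableEq V] [DecidableEq E]
variable (s t : E → V)

theorem inc_total (e : E) : ∑ u : V, inc s t u e = 0 := by
  unfold inc
  rw [Finset.sum_sub_distrib]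
  simp [Finset.sum_ite_eq]

theorem inc_nonendpoint {u : V} {e : E} (hs : s e ≠ u) (ht : t e ≠ u) : inc s t u e = 0 := by
  simp [inc, hs, ht]

theorem inc_src (hloop : ∀ e, s e ≠ t e) (e : E) : inc s t (s e) e = 1 := by
  simp [inc, (hloop e).symm]

theorem inc_tgt (hloop : ∀ e, s e ≠ t e) (e : E) : inc s t (t e) e = -1 := by
  simp [inc, hloop e]

theorem card_at (hloop : ∀ e, s e ≠ t e) {k : ℕ}
    (hreg : ∀ x : V, (univ.filter fun e => s e = x).card
        + (univ.filter fun e => t e = x).card = 2 * k) (v : V) :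
    (univ.filter fun e => s e = v ∨ t e = v).card = 2 * k := by
  rw [Finset.filter_or]
  rw [Finset.card_union_of_disjoint]
  · exact hreg v
  · rw [Finset.disjoint_filter]
    intro e _ hs ht
    exact hloop e (hs.trans ht.symm)

theorem card_colType (hloop : ∀ e, s e ≠ t e) {k : ℕ}
    (hreg : ∀ x : V, (univ.filter fun e => s e = x).card
        + (univ.filter fun e => t e = x).card = 2 * k) (v : V) :
    Fintype.card {e : E // s e ≠ v ∧ t e ≠ v} = Fintype.card E - 2 * k := by
  rw [Fintype.card_subtype]
  have h2 : (univ.filter fun e : E => ¬(s e = v ∨ t e = v)).card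
      = Fintype.card E - 2 * k := by
    have := Finset.card_filter_add_card_filter_not
      (s := (univ : Finset E)) (p := fun e => s e = v ∨ t e = v)
    rw [card_at s t hloop hreg v, Finset.card_univ] at this
    omega
  rw [← h2]
  congr 1
  apply Finset.filter_congr
  intro e _
  tauto

theorem card_pair_subtype {v w : V} (hvw : v ≠ w) :
    Fintype.card {x : V // x ≠ v ∧ x ≠ w} = Fintype.card V - 2 := by
  rw [Fintype.card_subtype]
  have : (univ.filter fun x : V => x ≠ v ∧ x ≠ w) = (univ.erase v).erase w := by
    ext x
    simp only [Finset.mem_filter, Finset.mem_erase, Finset.mem_univ, true_and, and_true]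
    tauto
  rw [this, Finset.card_erase_of_mem, Finset.card_erase_of_mem]
  · rw [Finset.card_univ]; omega
  · exact Finset.mem_univ v
  · exact Finset.mem_erase.mpr ⟨hvw.symm, Finset.mem_univ w⟩

theorem equiv_transfer (hloop : ∀ e, s e ≠ t e) {k : ℕ}
    (hreg : ∀ x : V, (univ.filter fun e => s e = x).card
        + (univ.filter fun e => t e = x).card = 2 * k)
    {v w v' w' : V} (hvw : v ≠ w) (hvw' : v' ≠ w')
    (ρ : (Fin k × {x : V // x ≠ v ∧ x ≠ w}) ≃ {e : E // s e ≠ v ∧ t e ≠ v}) :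
    Nonempty ((Fin k × {x : V // x ≠ v' ∧ x ≠ w'}) ≃ {e : E // s e ≠ v' ∧ t e ≠ v'}) := by
  rw [← Fintype.card_eq]
  have h1 := Fintype.card_congr ρ
  rw [Fintype.card_prod, Fintype.card_fin, card_pair_subtype hvw,
    card_colType s t hloop hreg v] at h1
  rw [Fintype.card_prod, Fintype.card_fin, card_pair_subtype hvw',
    card_colType s t hloop hreg v']
  exact h1


/-! ### the mod relation -/

def mrel (m a b : ℤ) : Prop := a ≡ b [ZMOD m] ∨ a ≡ -b [ZMOD m]

theorem mrel_refl (m a : ℤ) : mrel m a a := Or.inl (Int.ModEq.refl a)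

theorem mrel_symm {m a b : ℤ} (h : mrel m a b) : mrel m b a := by
  rcases h with h | h
  · exact Or.inl h.symm
  · right
    simpa using h.symm.neg

theorem mrel_trans {m a b c : ℤ} (h1 : mrel m a b) (h2 : mrel m b c) : mrel m a c := by
  rcases h1 with h1 | h1 <;> rcases h2 with h2 | h2
  · exact Or.inl (h1.trans h2)
  · exact Or.inr (h1.trans h2)
  · right; exact h1.trans h2.neg
  · left; refine h1.trans ?_
    simpa using h2.neg

theorem mrel_of_modEq_neg {m a b : ℤ} (h : a ≡ -b [ZMOD m]) : mrel m a b := Or.inr h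

/-! ### Lemma A : change of special vertex -/

section Graph
variable (s t : E → V) {k : ℕ}

theorem perm_mat_congr (v w : V)
    (ρ ρ₂ : (Fin k × {x : V // x ≠ v ∧ x ≠ w}) ≃ {e : E // s e ≠ v ∧ t e ≠ v}) :
    perm (Matrix.of fun i j : Fin k × {x : V // x ≠ v ∧ x ≠ w} => inc s t i.2.1 (ρ j).1)
      = perm (Matrix.of fun i j : Fin k × {x : V // x ≠ v ∧ x ≠ w} => inc s t i.2.1 (ρ₂ j).1) := by
  have h : (Matrix.of fun i j : Fin k × {x : V // x ≠ v ∧ x ≠ w} => inc s t i.2.1 (ρ j).1)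
      = (Matrix.of fun i j : Fin k × {x : V // x ≠ v ∧ x ≠ w} =>
          inc s t i.2.1 (ρ₂ j).1).submatrix (Equiv.refl _) (ρ.trans ρ₂.symm) := by
    ext i j
    simp [Matrix.submatrix_apply]
  rw [h, perm_submatrix]

theorem lemmaA (v w w' : V) (hwv : w ≠ v) (hw'v : w' ≠ v)
    (ρ₂ : (Fin k × {x : V // x ≠ v ∧ x ≠ w}) ≃ {e : E // s e ≠ v ∧ t e ≠ v})
    (ρ : (Fin k × {x : V // x ≠ v ∧ x ≠ w'}) ≃ {e : E // s e ≠ v ∧ t e ≠ v}) :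
    mrel ((k : ℤ) + 1)
      (perm (Matrix.of fun i j : Fin k × {x : V // x ≠ v ∧ x ≠ w} => inc s t i.2.1 (ρ₂ j).1))
      (perm (Matrix.of fun i j : Fin k × {x : V // x ≠ v ∧ x ≠ w'} => inc s t i.2.1 (ρ j).1)) := by
  classical
  by_cases hww' : w = w'
  · subst hww'
    rw [perm_mat_congr s t v w ρ ρ₂]
    exact mrel_refl _ _
  -- main case
  have hwU' : (w ≠ v ∧ w ≠ w') := ⟨hwv, hww'⟩
  set vert : ℕ → (Fin k × {x : V // x ≠ v ∧ x ≠ w'}) → V := fun j i => if i.2.1 = w ∧ i.1.1 < j then w' else i.2.1 with hvert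
  set X : ℕ → Matrix (Fin k × {x : V // x ≠ v ∧ x ≠ w'}) (Fin k × {x : V // x ≠ v ∧ x ≠ w'}) ℤ := fun j => Matrix.of fun i c => inc s t (vert j i) (ρ c).1 with hX
  set T : Finset V := (univ.erase w).erase v with hT
  -- the step
  have step : ∀ n, n < k → perm (X n) ≡ -(perm (X (n+1))) [ZMOD ((k:ℤ)+1)] := by
    intro n hn
    set i₀ : Fin k × {x : V // x ≠ v ∧ x ≠ w'} := (⟨n, hn⟩, ⟨w, hwU'⟩) with hi₀
    have hXrow : X n i₀ = fun c => inc s t w (ρ c).1 := by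
      funext c
      show inc s t (vert n i₀) (ρ c).1 = _
      have : vert n i₀ = w := by simp [hvert, hi₀]
      rw [this]
    have hrel : (fun c : Fin k × {x : V // x ≠ v ∧ x ≠ w'} => inc s t w (ρ c).1)
        = fun c => ∑ u ∈ T, -(inc s t u (ρ c).1) := by
      funext c
      have h0 := inc_total s t (ρ c).1
      rw [← Finset.add_sum_erase univ _ (Finset.mem_univ w)] at h0
      have hvm : v ∈ univ.erase w :=
        Finset.mem_erase.mpr ⟨fun hv => hwv hv.symm, Finset.mem_univ v⟩
      rw [← Finset.add_sum_erase _ _ hvm] at h0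
      rw [inc_nonendpoint s t (ρ c).2.1 (ρ c).2.2] at h0
      rw [Finset.sum_neg_distrib]
      rw [← hT] at h0
      omega
    have e1 : perm (X n) = ∑ u ∈ T, -perm ((X n).updateRow i₀ (fun c => inc s t u (ρ c).1)) := by
      conv_lhs => rw [← Matrix.updateRow_eq_self (X n) i₀, hXrow, hrel]
      rw [perm_updateRow_sum]
      exact Finset.sum_congr rfl (fun u _ => perm_updateRow_neg _ _ _)
    have hw'T : w' ∈ T := by
      rw [hT]
      exact Finset.mem_erase.mpr ⟨hw'v,
        Finset.mem_erase.mpr ⟨fun h => hww' h.symm, Finset.mem_univ w'⟩⟩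
    have e2 : perm (X n) = -perm ((X n).updateRow i₀ (fun c => inc s t w' (ρ c).1))
        + ∑ u ∈ T.erase w', -perm ((X n).updateRow i₀ (fun c => inc s t u (ρ c).1)) := by
      rw [e1, ← Finset.add_sum_erase T _ hw'T]
    have e3 : (X n).updateRow i₀ (fun c => inc s t w' (ρ c).1) = X (n+1) := by
      ext i c
      rw [Matrix.updateRow_apply]
      by_cases hi : i = i₀
      · rw [if_pos hi, hi]
        show inc s t w' (ρ c).1 = inc s t (vert (n+1) i₀) (ρ c).1
        have hv : vert (n+1) i₀ = w' := by simp [hvert, hi₀, Nat.lt_succ_self]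
        rw [hv]
      · rw [if_neg hi]
        show inc s t (vert n i) (ρ c).1 = inc s t (vert (n+1) i) (ρ c).1
        have hv : vert n i = vert (n+1) i := by
          by_cases h2 : i.2.1 = w
          · have hne : i.1.1 ≠ n := by
              intro hh
              exact hi (Prod.ext (Fin.ext hh) (Subtype.ext h2))
            simp only [hvert, h2, true_and]
            by_cases h3 : i.1.1 < n
            · rw [if_pos h3, if_pos (by omega : i.1.1 < n + 1)]
            · rw [if_neg h3, if_neg (by omega : ¬ i.1.1 < n + 1)]
          · simp [hvert, h2]
        rw [hv]
    have hdvd : ∀ u ∈ T.erase w',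
        ((k:ℤ)+1) ∣ perm ((X n).updateRow i₀ (fun c => inc s t u (ρ c).1)) := by
      intro u hu
      have hu1 : u ≠ w' := (Finset.mem_erase.mp hu).1
      have hu2 : u ≠ v := (Finset.mem_erase.mp (Finset.mem_erase.mp hu).2).1
      have hu3 : u ≠ w :=
        (Finset.mem_erase.mp (Finset.mem_erase.mp (Finset.mem_erase.mp hu).2).2).1
      set uS : {x : V // x ≠ v ∧ x ≠ w'} := ⟨u, hu2, hu1⟩ with huS
      set S : Finset (Fin k × {x : V // x ≠ v ∧ x ≠ w'}) := insert i₀ (univ.image fun i : Fin k => (i, uS)) with hS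
      have hiS : i₀ ∉ univ.image fun i : Fin k => (i, uS) := by
        intro hmem
        obtain ⟨a, -, hEq⟩ := Finset.mem_image.mp hmem
        exact hu3 (congrArg Subtype.val (congrArg Prod.snd (hEq.trans hi₀)))
      have hcard : S.card = k + 1 := by
        rw [hS, Finset.card_insert_of_notMem hiS,
          Finset.card_image_of_injective _ (fun a b h => by simpa using congrArg Prod.fst h),
          Finset.card_univ, Fintype.card_fin]
      have hconst : ∀ i ∈ S, ((X n).updateRow i₀ (fun c => inc s t u (ρ c).1)) i
          = (fun c => inc s t u (ρ c).1) := by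
        intro i hiMem
        rw [hS, Finset.mem_insert] at hiMem
        rcases hiMem with rfl | hiMem
        · exact Matrix.updateRow_self
        · obtain ⟨a, -, rfl⟩ := Finset.mem_image.mp hiMem
          have hne : ((a, uS) : Fin k × {x : V // x ≠ v ∧ x ≠ w'}) ≠ i₀ := fun hEq =>
            hu3 (congrArg Subtype.val (congrArg Prod.snd (hEq.trans hi₀)))
          rw [Matrix.updateRow_ne hne]
          funext c
          show inc s t (vert n (a, uS)) (ρ c).1 = _
          have hv : vert n (a, uS) = u := by simp [hvert, huS, hu3]
          rw [hv]
      have hfact := factorial_dvd_perm _ S _ hconst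
      rw [hcard] at hfact
      refine dvd_trans ?_ hfact
      exact_mod_cast Nat.dvd_factorial (by omega : 0 < k + 1) (le_refl (k+1))
    rw [Int.modEq_iff_dvd]
    have key : -perm (X (n+1)) - perm (X n)
        = - ∑ u ∈ T.erase w', -perm ((X n).updateRow i₀ (fun c => inc s t u (ρ c).1)) := by
      rw [e2, e3]
      ring
    rw [key]
    exact dvd_neg.mpr (Finset.dvd_sum (fun u hu => dvd_neg.mpr (hdvd u hu)))
  -- chain of steps
  have main : ∀ j, j ≤ k → mrel ((k:ℤ)+1) (perm (X 0)) (perm (X j)) := by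
    intro j
    induction j with
    | zero => intro _; exact mrel_refl _ _
    | succ n ih =>
      intro h
      exact mrel_trans (ih (by omega)) (mrel_of_modEq_neg (step n (by omega)))
  have hX0 : X 0 = Matrix.of fun i j : Fin k × {x : V // x ≠ v ∧ x ≠ w'} =>
      inc s t i.2.1 (ρ j).1 := by
    ext i c
    show inc s t (vert 0 i) (ρ c).1 = _
    have hv : vert 0 i = i.2.1 := by simp [hvert]
    rw [hv]
    rfl
  have hvw'' : w' ≠ w := fun hh => hww' hh.symm
  let swapE : {x : V // x ≠ v ∧ x ≠ w'} ≃ {x : V // x ≠ v ∧ x ≠ w} :=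
    { toFun := fun x => if h : x.1 = w then ⟨w', hw'v, hvw''⟩ else ⟨x.1, x.2.1, h⟩,
      invFun := fun y => if h : y.1 = w' then ⟨w, hwv, hww'⟩ else ⟨y.1, y.2.1, h⟩,
      left_inv := fun x => by
        by_cases h : x.1 = w
        · simp only [dif_pos h]
          exact Subtype.ext h.symm
        · simp only [dif_neg h, dif_neg x.2.2]
      right_inv := fun y => by
        by_cases h : y.1 = w'
        · simp only [dif_pos h]
          exact Subtype.ext h.symm
        · simp only [dif_neg h, dif_neg y.2.2] }
  have hXk : perm (X k) = perm (Matrix.of fun i j : Fin k × {x : V // x ≠ v ∧ x ≠ w} =>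
      inc s t i.2.1 (ρ₂ j).1) := by
    have hEq : X k = (Matrix.of fun i j : Fin k × {x : V // x ≠ v ∧ x ≠ w} =>
        inc s t i.2.1 (ρ₂ j).1).submatrix
        ((Equiv.refl (Fin k)).prodCongr swapE) (ρ.trans ρ₂.symm) := by
      ext i c
      show inc s t (vert k i) (ρ c).1
        = inc s t ((((Equiv.refl (Fin k)).prodCongr swapE) i).2).1 (ρ₂ ((ρ.trans ρ₂.symm) c)).1
      have hc : (ρ₂ ((ρ.trans ρ₂.symm) c)).1 = (ρ c).1 := by simp
      rw [hc]
      congr 1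
      show vert k i = (swapE i.2).1
      by_cases h : i.2.1 = w
      · have h1 : vert k i = w' := by simp [hvert, h, i.1.isLt]
        have h2 : (swapE i.2).1 = w' := by
          simp only [swapE, Equiv.coe_fn_mk]
          rw [dif_pos h]
        rw [h1, h2]
      · have h1 : vert k i = i.2.1 := by simp [hvert, h]
        have h2 : (swapE i.2).1 = i.2.1 := by
          simp only [swapE, Equiv.coe_fn_mk]
          rw [dif_neg h]
        rw [h1, h2]
    rw [hEq, perm_submatrix]
  refine mrel_symm ?_
  rw [← hX0, ← hXk]
  exact main k le_rfl

end Graph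

section Graph
open scoped Classical in
noncomputable def avd (s t : E → V) (v : V) : Finset E :=
  univ.filter (fun e => s e ≠ v ∧ t e ≠ v)

open scoped Classical in
noncomputable def OrS (s t : E → V) (k : ℕ) (v w : V) : Finset (E → V) :=
  univ.filter (fun G =>
    (∀ e : E, if s e ≠ v ∧ t e ≠ v then ((G e = s e ∨ G e = t e) ∧ G e ≠ v ∧ G e ≠ w)
      else G e = s e)
    ∧ ∀ x : V, x ≠ v → x ≠ w → ((avd s t v).filter (fun e => G e = x)).card = k)

noncomputable def TT (s t : E → V) (k : ℕ) (v w : V) : ℤ :=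
  ∑ G ∈ OrS s t k v w, ∏ e ∈ avd s t v, inc s t (G e) e

variable (s t : E → V) {k : ℕ}

theorem mem_avd {v : V} {e : E} : e ∈ avd s t v ↔ (s e ≠ v ∧ t e ≠ v) := by
  simp [avd]

theorem mem_OrS {v w : V} {G : E → V} : G ∈ OrS s t k v w ↔
    ((∀ e : E, if s e ≠ v ∧ t e ≠ v then ((G e = s e ∨ G e = t e) ∧ G e ≠ v ∧ G e ≠ w)
      else G e = s e)
    ∧ ∀ x : V, x ≠ v → x ≠ w → ((avd s t v).filter (fun e => G e = x)).card = k) := by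
  simp [OrS]

theorem perm_eq_TT (v w : V) (hvw : v ≠ w)
    (ρ : (Fin k × {x : V // x ≠ v ∧ x ≠ w}) ≃ {e : E // s e ≠ v ∧ t e ≠ v}) :
    perm (Matrix.of fun i j : Fin k × {x : V // x ≠ v ∧ x ≠ w} => inc s t i.2.1 (ρ j).1)
      = ((k.factorial : ℤ))^(Fintype.card V - 2) * TT s t k v w := by
  classical
  have hmaster := master (ι := Fin k × {x : V // x ≠ v ∧ x ≠ w})
    (U := {x : V // x ≠ v ∧ x ≠ w})
    Prod.snd (fun u j => inc s t u.1 (ρ j).1)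
  have hfib : ∀ x : {x : V // x ≠ v ∧ x ≠ w},
      (univ.filter fun i : Fin k × {x : V // x ≠ v ∧ x ≠ w} => i.2 = x).card = k := by
    intro x
    have himg : (univ.filter fun i : Fin k × {x : V // x ≠ v ∧ x ≠ w} => i.2 = x)
        = univ.image (fun a : Fin k => (a, x)) := by
      ext i
      simp only [Finset.mem_filter, Finset.mem_univ, true_and, Finset.mem_image]
      constructor
      · intro h; exact ⟨i.1, by rw [← h]⟩
      · rintro ⟨a, rfl⟩; rfl
    rw [himg, Finset.card_image_of_injective _ (fun a b h => by simpa using congrArg Prod.fst h),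
      Finset.card_univ, Fintype.card_fin]
  simp only [hfib] at hmaster
  rw [hmaster, ← Finset.mul_sum]
  have hconst : (∏ _x : {x : V // x ≠ v ∧ x ≠ w}, ((k.factorial : ℤ)))
      = ((k.factorial : ℤ))^(Fintype.card V - 2) := by
    rw [Finset.prod_const, Finset.card_univ, card_pair_subtype hvw]
  rw [hconst]
  congr 1
  -- restrict to "good" assignments
  have hrestrict : ∑ g ∈ univ.filter (fun g : (Fin k × {x : V // x ≠ v ∧ x ≠ w}) → {x : V // x ≠ v ∧ x ≠ w} =>
        ∀ x, (univ.filter fun j => g j = x).card = k), ∏ j, inc s t (g j).1 (ρ j).1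
      = ∑ g ∈ (univ.filter (fun g : (Fin k × {x : V // x ≠ v ∧ x ≠ w}) → {x : V // x ≠ v ∧ x ≠ w} =>
        ∀ x, (univ.filter fun j => g j = x).card = k)).filter
          (fun g => ∀ j, ((g j).1 = s (ρ j).1 ∨ (g j).1 = t (ρ j).1)),
          ∏ j, inc s t (g j).1 (ρ j).1 := by
    refine (Finset.sum_subset (Finset.filter_subset _ _) ?_).symm
    intro g hg hng
    have hx : ¬ ∀ j, ((g j).1 = s (ρ j).1 ∨ (g j).1 = t (ρ j).1) := by
      intro hgood
      exact hng (Finset.mem_filter.mpr ⟨hg, hgood⟩)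
    push_neg at hx
    obtain ⟨j, hj⟩ := hx
    exact Finset.prod_eq_zero (Finset.mem_univ j)
      (inc_nonendpoint s t (fun h => hj.1 h.symm) (fun h => hj.2 h.symm))
  rw [hrestrict]
  -- bijection with OrS
  classical
  set iMap : ((Fin k × {x : V // x ≠ v ∧ x ≠ w}) → {x : V // x ≠ v ∧ x ≠ w}) → (E → V) :=
    fun g e => if h : s e ≠ v ∧ t e ≠ v then (g (ρ.symm ⟨e, h⟩)).1 else s e with hiMap
  set jMap : (E → V) → ((Fin k × {x : V // x ≠ v ∧ x ≠ w}) → {x : V // x ≠ v ∧ x ≠ w}) :=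
    fun G j => if h : G (ρ j).1 ≠ v ∧ G (ρ j).1 ≠ w then ⟨G (ρ j).1, h⟩ else j.2 with hjMap
  have hiMapApply : ∀ g j, iMap g (ρ j).1 = (g j).1 := by
    intro g j
    rw [hiMap]
    simp only []
    rw [dif_pos (ρ j).2]
    congr 2
    rw [Subtype.coe_eta, Equiv.symm_apply_apply]
  rw [TT]
  refine Finset.sum_nbij' iMap jMap ?_ ?_ ?_ ?_ ?_
  · -- maps into OrS
    intro g hg
    rw [Finset.mem_filter] at hg
    obtain ⟨hgKs, hgood⟩ := hg
    rw [Finset.mem_filter] at hgKs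
    replace hgKs := hgKs.2
    rw [mem_OrS]
    constructor
    · intro e
      by_cases h : s e ≠ v ∧ t e ≠ v
      · rw [if_pos h]
        have hv : iMap g e = (g (ρ.symm ⟨e, h⟩)).1 := by rw [hiMap]; exact dif_pos h
        refine ⟨?_, by rw [hv]; exact (g _).2.1, by rw [hv]; exact (g _).2.2⟩
        rw [hv]
        have hgd := hgood (ρ.symm ⟨e, h⟩)
        rwa [Equiv.apply_symm_apply] at hgd
      · rw [if_neg h]
        rw [hiMap]
        exact dif_neg h
    · intro x hx1 hx2
      refine Eq.trans (b := (univ.filter fun j => g j = ⟨x, hx1, hx2⟩).card)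
        ?_ (hgKs ⟨x, hx1, hx2⟩)
      refine Finset.card_bij
        (fun e he => ρ.symm ⟨e, (mem_avd s t).mp (Finset.mem_filter.mp he).1⟩) ?_ ?_ ?_
      · intro e he
        obtain ⟨hea, hex⟩ := Finset.mem_filter.mp he
        rw [Finset.mem_filter]
        refine ⟨Finset.mem_univ _, ?_⟩
        apply Subtype.ext
        have h := (mem_avd s t (v := v)).mp hea
        have hval : iMap g e = (g (ρ.symm ⟨e, h⟩)).1 := by rw [hiMap]; exact dif_pos h
        exact hval.symm.trans hex
      · intro e1 h1 e2 h2 hEq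
        have := congrArg (fun z => (ρ z).1) hEq
        simpa using this
      · intro j hj
        rw [Finset.mem_filter] at hj
        refine ⟨(ρ j).1, ?_, ?_⟩
        · rw [Finset.mem_filter]
          refine ⟨(mem_avd s t).mpr (ρ j).2, ?_⟩
          rw [hiMapApply g j, hj.2]
        · simp
  · -- jMap into the filtered Ks
    intro G hG
    rw [mem_OrS] at hG
    obtain ⟨hGe, hGd⟩ := hG
    have hGj : ∀ j : Fin k × {x : V // x ≠ v ∧ x ≠ w},
        (G (ρ j).1 = s (ρ j).1 ∨ G (ρ j).1 = t (ρ j).1) ∧ G (ρ j).1 ≠ v ∧ G (ρ j).1 ≠ w := by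
      intro j
      have := hGe (ρ j).1
      rwa [if_pos (ρ j).2] at this
    have hjval : ∀ j, (jMap G j).1 = G (ρ j).1 := by
      intro j
      have h2 := (hGj j).2
      simp [hjMap, h2.1, h2.2]
    rw [Finset.mem_filter, Finset.mem_filter]
    refine ⟨⟨Finset.mem_univ _, ?_⟩, ?_⟩
    · intro x
      refine Eq.trans (b := ((avd s t v).filter fun e => G e = x.1).card)
        ?_ (hGd x.1 x.2.1 x.2.2)
      refine Finset.card_bij (fun j _ => (ρ j).1) ?_ ?_ ?_
      · intro j hj
        rw [Finset.mem_filter] at hj ⊢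
        refine ⟨(mem_avd s t).mpr (ρ j).2, ?_⟩
        rw [← hjval j, hj.2]
      · intro j1 h1 j2 h2 hEq
        exact ρ.injective (Subtype.ext hEq)
      · intro e he
        rw [Finset.mem_filter] at he
        have h := (mem_avd s t (v := v)).mp he.1
        refine ⟨ρ.symm ⟨e, h⟩, ?_, ?_⟩
        · rw [Finset.mem_filter]
          refine ⟨Finset.mem_univ _, ?_⟩
          apply Subtype.ext
          have hs : ((ρ (ρ.symm ⟨e, h⟩)) : E) = e :=
            congrArg Subtype.val (Equiv.apply_symm_apply ρ ⟨e, h⟩)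
          rw [hjval, hs]
          exact he.2
        · simp
    · intro j
      rw [hjval j]
      exact (hGj j).1
  · -- left inverse
    intro g hg
    funext j
    have h1 : iMap g (ρ j).1 = (g j).1 := hiMapApply g j
    have h2 : iMap g (ρ j).1 ≠ v := by rw [h1]; exact (g j).2.1
    have h3 : iMap g (ρ j).1 ≠ w := by rw [h1]; exact (g j).2.2
    have h4 := (g j).2.1
    have h5 := (g j).2.2
    simp [hjMap, h2, h3, h1, h4, h5]
  · -- right inverse
    intro G hG
    rw [mem_OrS] at hG
    obtain ⟨hGe, -⟩ := hG
    funext e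
    by_cases h : s e ≠ v ∧ t e ≠ v
    · have hcond := hGe e
      rw [if_pos h] at hcond
      have hs : ((ρ (ρ.symm ⟨e, h⟩)) : E) = e := by rw [Equiv.apply_symm_apply]
      have h2 : G ((ρ (ρ.symm ⟨e, h⟩)) : E) ≠ v := by rw [hs]; exact hcond.2.1
      have h3 : G ((ρ (ρ.symm ⟨e, h⟩)) : E) ≠ w := by rw [hs]; exact hcond.2.2
      simp [hiMap, hjMap, h, h2, h3, hs, hcond.2.1, hcond.2.2]
    · have hcond := hGe e
      rw [if_neg h] at hcond
      simp [hiMap, h, hcond]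
  · -- values
    intro g hg
    have h1 : ∏ e ∈ avd s t v, inc s t (iMap g e) e
        = ∏ c : {e : E // s e ≠ v ∧ t e ≠ v}, inc s t (iMap g c.1) c.1 :=
      Finset.prod_subtype _ (fun e => mem_avd s t) _
    have h2 : ∏ c : {e : E // s e ≠ v ∧ t e ≠ v}, inc s t (iMap g c.1) c.1
        = ∏ j, inc s t (iMap g (ρ j).1) (ρ j).1 := (Equiv.prod_comp ρ _).symm
    rw [h1, h2]
    exact Finset.prod_congr rfl (fun j _ => by rw [hiMapApply g j])

/-! ### the involution -/

open scoped Classical in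
noncomputable def other (s t : E → V) (e : E) (u : V) : V := if s e = u then t e else s e

open scoped Classical in
noncomputable def bmap (s t : E → V) (v w : V) (G : E → V) : E → V := fun e =>
  if s e ≠ w ∧ t e ≠ w then (if s e ≠ v ∧ t e ≠ v then other s t e (G e) else other s t e v)
  else s e

variable (s t : E → V) {k : ℕ}

theorem other_endpoint (e : E) (u : V) : other s t e u = s e ∨ other s t e u = t e := by
  unfold other; split_ifs <;> simp

theorem other_src (e : E) : other s t e (s e) = t e := by
  unfold other; rw [if_pos rfl]

theorem other_tgt (hloop : ∀ e, s e ≠ t e) (e : E) : other s t e (t e) = s e := by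
  unfold other; rw [if_neg (hloop e)]

theorem other_ne (hloop : ∀ e, s e ≠ t e) {e : E} {u : V} (hu : u = s e ∨ u = t e) :
    other s t e u ≠ u := by
  unfold other
  rcases hu with rfl | rfl
  · rw [if_pos rfl]; exact fun h => hloop e h.symm
  · rw [if_neg (hloop e)]; exact hloop e

theorem other_other (hloop : ∀ e, s e ≠ t e) {e : E} {u : V} (hu : u = s e ∨ u = t e) :
    other s t e (other s t e u) = u := by
  rcases hu with rfl | rfl
  · rw [other_src, other_tgt s t hloop]
  · rw [other_tgt s t hloop, other_src]

theorem inc_other (hloop : ∀ e, s e ≠ t e) {e : E} {u : V} (hu : u = s e ∨ u = t e) :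
    inc s t (other s t e u) e = - inc s t u e := by
  rcases hu with rfl | rfl
  · rw [other_src, inc_tgt s t hloop, inc_src s t hloop]
  · rw [other_tgt s t hloop, inc_src s t hloop, inc_tgt s t hloop]
    ring

theorem other_at (e : E) (u x : V) (h : other s t e u = x) : s e = x ∨ t e = x := by
  rcases other_endpoint s t e u with h1 | h1
  · left; rw [← h1, h]
  · right; rw [← h1, h]

theorem other_eq (hloop : ∀ e, s e ≠ t e) {e : E} {u x : V} (hu : u = s e ∨ u = t e)
    (hx : s e = x ∨ t e = x) (hne : u ≠ x) : other s t e u = x := by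
  rcases hu with rfl | rfl
  · rw [other_src]
    rcases hx with h | h
    · exact absurd h hne
    · exact h
  · rw [other_tgt s t hloop]
    rcases hx with h | h
    · exact h
    · exact absurd h hne

theorem inc_unit (hloop : ∀ e, s e ≠ t e) {e : E} {u : V} (hu : u = s e ∨ u = t e) :
    inc s t u e = 1 ∨ inc s t u e = -1 := by
  rcases hu with rfl | rfl
  · left; exact inc_src s t hloop e
  · right; exact inc_tgt s t hloop e

/-- forced value on edges at `w`. -/
theorem OrS_forced (hloop : ∀ e, s e ≠ t e) {v w : V} {G : E → V}
    (hG : G ∈ OrS s t k v w) {e : E} (he : s e ≠ v ∧ t e ≠ v)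
    (hw : ¬(s e ≠ w ∧ t e ≠ w)) : G e = other s t e w := by
  have hc := ((mem_OrS s t).mp hG).1 e
  rw [if_pos he] at hc
  have hw' : s e = w ∨ t e = w := by tauto
  refine (other_eq s t hloop (by tauto) ?_ (Ne.symm hc.2.2)).symm
  rcases hc.1 with h2 | h2
  · left; exact h2.symm
  · right; exact h2.symm
theorem bmap_avd {v w : V} (G : E → V) {e : E} (hw : s e ≠ w ∧ t e ≠ w)
    (hv : s e ≠ v ∧ t e ≠ v) : bmap s t v w G e = other s t e (G e) := by
  unfold bmap; rw [if_pos hw, if_pos hv]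

theorem bmap_atv {v w : V} (G : E → V) {e : E} (hw : s e ≠ w ∧ t e ≠ w)
    (hv : ¬(s e ≠ v ∧ t e ≠ v)) : bmap s t v w G e = other s t e v := by
  unfold bmap; rw [if_pos hw, if_neg hv]

theorem bmap_atw {v w : V} (G : E → V) {e : E} (hw : ¬(s e ≠ w ∧ t e ≠ w)) :
    bmap s t v w G e = s e := by
  unfold bmap; rw [if_neg hw]

theorem OrS_endpoint {v w : V} {G : E → V} (hG : G ∈ OrS s t k v w) {e : E}
    (he : s e ≠ v ∧ t e ≠ v) :
    (G e = s e ∨ G e = t e) ∧ G e ≠ v ∧ G e ≠ w := by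
  have hc := ((mem_OrS s t).mp hG).1 e
  rwa [if_pos he] at hc

theorem bmap_mem (hloop : ∀ e, s e ≠ t e)
    (hreg : ∀ x : V, (univ.filter fun e => s e = x).card
        + (univ.filter fun e => t e = x).card = 2 * k)
    {v w : V} (hvw : v ≠ w) {G : E → V} (hG : G ∈ OrS s t k v w) :
    bmap s t v w G ∈ OrS s t k w v := by
  classical
  obtain ⟨hGe, hGd⟩ := (mem_OrS s t).mp hG
  rw [mem_OrS]
  constructor
  · intro e
    by_cases hw : s e ≠ w ∧ t e ≠ w
    · rw [if_pos hw]
      by_cases hv : s e ≠ v ∧ t e ≠ v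
      · rw [bmap_avd s t G hw hv]
        have hc := OrS_endpoint s t hG hv
        refine ⟨other_endpoint s t e (G e), ?_, ?_⟩
        · rcases other_endpoint s t e (G e) with h | h <;> rw [h]
          exacts [hw.1, hw.2]
        · rcases other_endpoint s t e (G e) with h | h <;> rw [h]
          exacts [hv.1, hv.2]
      · rw [bmap_atv s t G hw hv]
        have hv' : v = s e ∨ v = t e := by tauto
        refine ⟨other_endpoint s t e v, ?_, other_ne s t hloop hv'⟩
        rcases other_endpoint s t e v with h | h <;> rw [h]
        exacts [hw.1, hw.2]
    · rw [if_neg hw]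
      exact bmap_atw s t G hw
  · intro x hxw hxv
    -- the counting argument
    set I : Finset E := (avd s t v) ∩ (avd s t w) with hI
    set Dv : Finset E := (avd s t w) \ (avd s t v) with hDv
    set Dw : Finset E := (avd s t v) \ (avd s t w) with hDw
    have f1 : I ∪ Dv = avd s t w := by
      rw [hI, hDv, Finset.inter_comm, Finset.union_comm, Finset.sdiff_union_inter]
    have f2 : I ∪ Dw = avd s t v := by
      rw [hI, hDw, Finset.union_comm, Finset.sdiff_union_inter]
    have dis1 : Disjoint I Dv := by
      rw [hI, hDv]
      exact (Finset.sdiff_disjoint.mono_right Finset.inter_subset_left).symm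
    have dis2 : Disjoint I Dw := by
      rw [hI, hDw]
      exact (Finset.sdiff_disjoint.mono_right Finset.inter_subset_right).symm
    have dis3 : Disjoint Dv Dw := by
      rw [hDv, hDw]
      exact Finset.sdiff_disjoint.mono_right Finset.sdiff_subset
    -- memberships of I, Dv, Dw
    have hmemI : ∀ e, e ∈ I ↔ ((s e ≠ v ∧ t e ≠ v) ∧ (s e ≠ w ∧ t e ≠ w)) := by
      intro e; rw [hI, Finset.mem_inter, mem_avd, mem_avd]
    have hmemDv : ∀ e, e ∈ Dv ↔ ((s e ≠ w ∧ t e ≠ w) ∧ ¬(s e ≠ v ∧ t e ≠ v)) := by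
      intro e; rw [hDv, Finset.mem_sdiff, mem_avd, mem_avd]
    have hmemDw : ∀ e, e ∈ Dw ↔ ((s e ≠ v ∧ t e ≠ v) ∧ ¬(s e ≠ w ∧ t e ≠ w)) := by
      intro e; rw [hDw, Finset.mem_sdiff, mem_avd, mem_avd]
    -- c1 : split the target
    have c1 : ((avd s t w).filter (fun e => bmap s t v w G e = x)).card
        = (I.filter (fun e => bmap s t v w G e = x)).card
          + (Dv.filter (fun e => bmap s t v w G e = x)).card := by
      rw [← f1, Finset.filter_union,
        Finset.card_union_of_disjoint (Finset.disjoint_filter_filter dis1)]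
    -- c2
    have c2 : I.filter (fun e => bmap s t v w G e = x)
        = (I.filter (fun e => s e = x ∨ t e = x)).filter (fun e => ¬ G e = x) := by
      rw [Finset.filter_filter]
      apply Finset.filter_congr
      intro e he
      have hm := (hmemI e).mp he
      rw [bmap_avd s t G hm.2 hm.1]
      have hc := OrS_endpoint s t hG hm.1
      have hu : G e = s e ∨ G e = t e := hc.1
      constructor
      · intro h
        exact ⟨other_at s t e _ _ h, fun hx => other_ne s t hloop (by tauto)
          (by rw [h, hx])⟩
      · intro h
        exact other_eq s t hloop (by tauto) h.1 h.2
    have c3 : ((I.filter (fun e => s e = x ∨ t e = x)).filter (fun e => G e = x)).card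
        + ((I.filter (fun e => s e = x ∨ t e = x)).filter (fun e => ¬ G e = x)).card
        = (I.filter (fun e => s e = x ∨ t e = x)).card :=
      Finset.card_filter_add_card_filter_not _
    have c4 : (I.filter (fun e => s e = x ∨ t e = x)).filter (fun e => G e = x)
        = I.filter (fun e => G e = x) := by
      rw [Finset.filter_filter]
      apply Finset.filter_congr
      intro e he
      have hm := (hmemI e).mp he
      have hc := OrS_endpoint s t hG hm.1
      constructor
      · exact fun h => h.2
      · intro h
        refine ⟨?_, h⟩
        rcases hc.1 with h2 | h2
        · left; rw [← h2, h]
        · right; rw [← h2, h]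
    have c6 : (I.filter (fun e => G e = x)).card + (Dw.filter (fun e => G e = x)).card = k := by
      rw [← Finset.card_union_of_disjoint (Finset.disjoint_filter_filter dis2),
        ← Finset.filter_union, f2]
      exact hGd x hxv hxw
    have c7 : Dw.filter (fun e => G e = x) = Dw.filter (fun e => s e = x ∨ t e = x) := by
      apply Finset.filter_congr
      intro e he
      have hm := (hmemDw e).mp he
      have hforced : G e = other s t e w := OrS_forced s t hloop hG hm.1 hm.2
      rw [hforced]
      constructor
      · exact other_at s t e w x
      · intro h
        exact other_eq s t hloop (by tauto) h (Ne.symm hxw)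
    have c8 : Dv.filter (fun e => bmap s t v w G e = x)
        = Dv.filter (fun e => s e = x ∨ t e = x) := by
      apply Finset.filter_congr
      intro e he
      have hm := (hmemDv e).mp he
      rw [bmap_atv s t G hm.1 hm.2]
      constructor
      · exact other_at s t e v x
      · intro h
        exact other_eq s t hloop (by tauto) h (Ne.symm hxv)
    have c9 : (univ.filter (fun e => s e = x ∨ t e = x)).card = 2 * k :=
      card_at s t hloop hreg x
    have c10 : univ.filter (fun e : E => s e = x ∨ t e = x)
        = (I.filter (fun e => s e = x ∨ t e = x))
          ∪ (Dv.filter (fun e => s e = x ∨ t e = x))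
          ∪ (Dw.filter (fun e => s e = x ∨ t e = x)) := by
      ext e
      simp only [Finset.mem_union, Finset.mem_filter, Finset.mem_univ, true_and]
      constructor
      · intro hx
        by_cases hv : s e ≠ v ∧ t e ≠ v
        · by_cases hw : s e ≠ w ∧ t e ≠ w
          · exact Or.inl (Or.inl ⟨(hmemI e).mpr ⟨hv, hw⟩, hx⟩)
          · exact Or.inr ⟨(hmemDw e).mpr ⟨hv, hw⟩, hx⟩
        · by_cases hw : s e ≠ w ∧ t e ≠ w
          · exact Or.inl (Or.inr ⟨(hmemDv e).mpr ⟨hw, hv⟩, hx⟩)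
          · exfalso
            have h1 : s e = v ∨ t e = v := by tauto
            have h2 : s e = w ∨ t e = w := by tauto
            rcases h1 with h1 | h1 <;> rcases h2 with h2 | h2 <;> rcases hx with h3 | h3 <;>
              first
                | exact hvw (h1.symm.trans h2)
                | exact hxv (h3.symm.trans h1)
                | exact hxw (h3.symm.trans h2)
                | exact hloop e (h1.trans h2.symm)
                | exact hloop e (h1.trans h3.symm)
                | exact hloop e (h2.trans h3.symm)
                | exact hloop e (h3.trans h1.symm)
                | exact hloop e (h3.trans h2.symm)
                | exact hloop e (h2.trans h1.symm)
      · rintro ((h | h) | h)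
        · exact h.2
        · exact h.2
        · exact h.2
    have c11 : (I.filter (fun e => s e = x ∨ t e = x)).card
        + (Dv.filter (fun e => s e = x ∨ t e = x)).card
        + (Dw.filter (fun e => s e = x ∨ t e = x)).card = 2 * k := by
      rw [← c9, c10]
      rw [Finset.card_union_of_disjoint, Finset.card_union_of_disjoint]
      · exact Finset.disjoint_filter_filter dis1
      · refine Finset.disjoint_union_left.mpr
          ⟨Finset.disjoint_filter_filter dis2, Finset.disjoint_filter_filter dis3⟩
    have c4' := congrArg Finset.card c4
    have c7' := congrArg Finset.card c7
    rw [c1, c2, c8]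
    omega

theorem bmap_inv (hloop : ∀ e, s e ≠ t e) {v w : V} {G : E → V}
    (hG : G ∈ OrS s t k v w) : bmap s t w v (bmap s t v w G) = G := by
  funext e
  by_cases hv : s e ≠ v ∧ t e ≠ v
  · by_cases hw : s e ≠ w ∧ t e ≠ w
    · rw [bmap_avd s t _ hv hw, bmap_avd s t G hw hv]
      exact other_other s t hloop (OrS_endpoint s t hG hv).1
    · rw [bmap_atv s t _ hv hw]
      exact (OrS_forced s t hloop hG hv hw).symm
  · rw [bmap_atw s t _ hv]
    have hc := ((mem_OrS s t).mp hG).1 e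
    rw [if_neg hv] at hc
    exact hc.symm

theorem prod_unit {S : Finset E} {f : E → ℤ} (h : ∀ e ∈ S, f e = 1 ∨ f e = -1) :
    (∏ e ∈ S, f e) = 1 ∨ (∏ e ∈ S, f e) = -1 := by
  refine Finset.prod_induction f (fun z => z = 1 ∨ z = -1) ?_ (Or.inl rfl) h
  rintro a b (rfl | rfl) (rfl | rfl) <;> simp

theorem TT_swap (hloop : ∀ e, s e ≠ t e)
    (hreg : ∀ x : V, (univ.filter fun e => s e = x).card
        + (univ.filter fun e => t e = x).card = 2 * k)
    (v w : V) (hvw : v ≠ w) :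
    ∃ ε : ℤ, (ε = 1 ∨ ε = -1) ∧ TT s t k v w = ε * TT s t k w v := by
  classical
  set I : Finset E := (avd s t v) ∩ (avd s t w) with hI
  set Dv : Finset E := (avd s t w) \ (avd s t v) with hDv
  set Dw : Finset E := (avd s t v) \ (avd s t w) with hDw
  have f1 : I ∪ Dv = avd s t w := by
    rw [hI, hDv, Finset.inter_comm, Finset.union_comm, Finset.sdiff_union_inter]
  have f2 : I ∪ Dw = avd s t v := by
    rw [hI, hDw, Finset.union_comm, Finset.sdiff_union_inter]
  have dis1 : Disjoint I Dv := by
    rw [hI, hDv]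
    exact (Finset.sdiff_disjoint.mono_right Finset.inter_subset_left).symm
  have dis2 : Disjoint I Dw := by
    rw [hI, hDw]
    exact (Finset.sdiff_disjoint.mono_right Finset.inter_subset_right).symm
  have hmemI : ∀ e, e ∈ I ↔ ((s e ≠ v ∧ t e ≠ v) ∧ (s e ≠ w ∧ t e ≠ w)) := by
    intro e; rw [hI, Finset.mem_inter, mem_avd, mem_avd]
  have hmemDv : ∀ e, e ∈ Dv ↔ ((s e ≠ w ∧ t e ≠ w) ∧ ¬(s e ≠ v ∧ t e ≠ v)) := by
    intro e; rw [hDv, Finset.mem_sdiff, mem_avd, mem_avd]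
  have hmemDw : ∀ e, e ∈ Dw ↔ ((s e ≠ v ∧ t e ≠ v) ∧ ¬(s e ≠ w ∧ t e ≠ w)) := by
    intro e; rw [hDw, Finset.mem_sdiff, mem_avd, mem_avd]
  set Cw : ℤ := ∏ e ∈ Dw, inc s t (other s t e w) e with hCwdef
  set Cv : ℤ := ∏ e ∈ Dv, inc s t (other s t e v) e with hCvdef
  have hCw : Cw = 1 ∨ Cw = -1 :=
    prod_unit (fun e _ => inc_unit s t hloop (other_endpoint s t e w))
  have hCv : Cv = 1 ∨ Cv = -1 :=
    prod_unit (fun e _ => inc_unit s t hloop (other_endpoint s t e v))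
  have hpow : ((-1 : ℤ))^(I.card) = 1 ∨ ((-1 : ℤ))^(I.card) = -1 := by
    rcases Nat.even_or_odd I.card with h | h
    · left; exact h.neg_one_pow
    · right; exact h.neg_one_pow
  refine ⟨Cv * Cw * (-1)^(I.card), ?_, ?_⟩
  · rcases hCv with h1 | h1 <;> rcases hCw with h2 | h2 <;> rcases hpow with h3 | h3 <;>
      rw [h1, h2, h3] <;> norm_num
  · have key : ∀ G ∈ OrS s t k v w,
        (∏ e ∈ avd s t v, inc s t (G e) e)
        = (Cv * Cw * (-1)^(I.card)) * ∏ e ∈ avd s t w, inc s t (bmap s t v w G e) e := by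
      intro G hG
      have hsplitv : ∏ e ∈ avd s t v, inc s t (G e) e
          = (∏ e ∈ I, inc s t (G e) e) * (∏ e ∈ Dw, inc s t (G e) e) := by
        rw [← f2, Finset.prod_union dis2]
      have hDwprod : ∏ e ∈ Dw, inc s t (G e) e = Cw := by
        refine Finset.prod_congr rfl (fun e he => ?_)
        rw [OrS_forced s t hloop hG ((hmemDw e).mp he).1 ((hmemDw e).mp he).2]
      have hsplitw : ∏ e ∈ avd s t w, inc s t (bmap s t v w G e) e
          = (∏ e ∈ I, inc s t (bmap s t v w G e) e)
            * (∏ e ∈ Dv, inc s t (bmap s t v w G e) e) := by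
        rw [← f1, Finset.prod_union dis1]
      have hIb : ∏ e ∈ I, inc s t (bmap s t v w G e) e
          = (-1 : ℤ)^(I.card) * ∏ e ∈ I, inc s t (G e) e := by
        have hptwise : ∀ e ∈ I, inc s t (bmap s t v w G e) e = (-1) * inc s t (G e) e := by
          intro e he
          have hm := (hmemI e).mp he
          rw [bmap_avd s t G hm.2 hm.1,
            inc_other s t hloop (OrS_endpoint s t hG hm.1).1]
          ring
        rw [Finset.prod_congr rfl hptwise, Finset.prod_mul_distrib, Finset.prod_const]
      have hDvb : ∏ e ∈ Dv, inc s t (bmap s t v w G e) e = Cv := by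
        refine Finset.prod_congr rfl (fun e he => ?_)
        have hm := (hmemDv e).mp he
        rw [bmap_atv s t G hm.1 hm.2]
      rw [hsplitv, hDwprod, hsplitw, hIb, hDvb]
      have hCv2 : Cv * Cv = 1 := by rcases hCv with h | h <;> rw [h] <;> norm_num
      have hpow2 : ((-1 : ℤ))^(I.card) * ((-1 : ℤ))^(I.card) = 1 := by
        rw [← pow_add]
        exact Even.neg_one_pow ⟨I.card, rfl⟩
      have hre : Cv * Cw * (-1 : ℤ)^(I.card)
          * ((-1 : ℤ)^(I.card) * (∏ e ∈ I, inc s t (G e) e) * Cv)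
          = (Cv * Cv) * ((-1 : ℤ)^(I.card) * (-1 : ℤ)^(I.card)) * Cw
            * (∏ e ∈ I, inc s t (G e) e) := by ring
      rw [hre, hCv2, hpow2]
      ring
    rw [TT, TT]
    rw [Finset.sum_congr rfl key, ← Finset.mul_sum]
    congr 1
    refine Finset.sum_nbij' (bmap s t v w) (bmap s t w v) ?_ ?_ ?_ ?_ ?_
    · exact fun G hG => bmap_mem s t hloop hreg hvw hG
    · exact fun H hH => bmap_mem s t hloop hreg (Ne.symm hvw) hH
    · exact fun G hG => bmap_inv s t hloop hG
    · exact fun H hH => bmap_inv s t hloop hH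
    · exact fun G hG => rfl

theorem step2 (hloop : ∀ e, s e ≠ t e)
    (hreg : ∀ x : V, (univ.filter fun e => s e = x).card
        + (univ.filter fun e => t e = x).card = 2 * k)
    (v w : V) (hvw : v ≠ w)
    (ρ : (Fin k × {x : V // x ≠ v ∧ x ≠ w}) ≃ {e : E // s e ≠ v ∧ t e ≠ v})
    (ρ' : (Fin k × {x : V // x ≠ w ∧ x ≠ v}) ≃ {e : E // s e ≠ w ∧ t e ≠ w}) :
    mrel ((k : ℤ) + 1)
      (perm (Matrix.of fun i j : Fin k × {x : V // x ≠ v ∧ x ≠ w} => inc s t i.2.1 (ρ j).1))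
      (perm (Matrix.of fun i j : Fin k × {x : V // x ≠ w ∧ x ≠ v} => inc s t i.2.1 (ρ' j).1)) := by
  obtain ⟨ε, hε, hTT⟩ := TT_swap s t hloop hreg v w hvw
  have h1 := perm_eq_TT s t v w hvw ρ
  have h2 := perm_eq_TT s t w v (Ne.symm hvw) ρ'
  rcases hε with rfl | rfl
  · left
    rw [h1, h2, hTT, one_mul]
  · right
    have hmul : ((k.factorial : ℤ))^(Fintype.card V - 2) * ((-1) * TT s t k w v)
        = -(((k.factorial : ℤ))^(Fintype.card V - 2) * TT s t k w v) := by ring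
    rw [h1, h2, hTT, hmul]

end Graph

end GP

/-- For a connected 2k-regular loopless multigraph Γ, all decompletions of Γ have equal
graph permanent: for any deleted vertices v, v' with special vertices w ≠ v, w' ≠ v',
the permanents of the corresponding kDSI matrices agree up to sign modulo k+1. -/
theorem stmt13 {V E : Type*} [Fintype V] [Fintype E] [DecidableEq V] [DecidableEq E]
    (s t : E → V) (hloop : ∀ e, s e ≠ t e)
    (hconn : (SimpleGraph.fromRel (fun a b => ∃ e, s e = a ∧ t e = b)).Connected)
    (k : ℕ)
    (hreg : ∀ x : V, (univ.filter fun e => s e = x).card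
        + (univ.filter fun e => t e = x).card = 2 * k)
    (v w v' w' : V) (hvw : w ≠ v) (hvw' : w' ≠ v')
    (ρ : (Fin k × {x : V // x ≠ v ∧ x ≠ w}) ≃ {e : E // s e ≠ v ∧ t e ≠ v})
    (ρ' : (Fin k × {x : V // x ≠ v' ∧ x ≠ w'}) ≃ {e : E // s e ≠ v' ∧ t e ≠ v'}) :
    perm (Matrix.of fun i j : Fin k × {x : V // x ≠ v ∧ x ≠ w} =>
          inc s t i.2.1 (ρ j).1)
      ≡ perm (Matrix.of fun i j : Fin k × {x : V // x ≠ v' ∧ x ≠ w'} =>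
          inc s t i.2.1 (ρ' j).1) [ZMOD ((k : ℤ) + 1)] ∨
    perm (Matrix.of fun i j : Fin k × {x : V // x ≠ v ∧ x ≠ w} =>
          inc s t i.2.1 (ρ j).1)
      ≡ -perm (Matrix.of fun i j : Fin k × {x : V // x ≠ v' ∧ x ≠ w'} =>
          inc s t i.2.1 (ρ' j).1) [ZMOD ((k : ℤ) + 1)] := by
  classical
  by_cases hvv' : v = v'
  · subst hvv'
    exact GP.lemmaA s t v w w' hvw hvw' ρ ρ'
  · have hv'v : v' ≠ v := fun h => hvv' h.symm
    obtain ⟨ρvv'⟩ := GP.equiv_transfer s t hloop hreg (Ne.symm hvw) hvv' ρ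
    obtain ⟨ρv'v⟩ := GP.equiv_transfer s t hloop hreg (Ne.symm hvw) hv'v ρ
    have s1 := GP.lemmaA s t v w v' hvw hv'v ρ ρvv'
    have s2 := GP.step2 s t hloop hreg v v' hvv' ρvv' ρv'v
    have s3 := GP.lemmaA s t v' v w' hvv' hvw' ρv'v ρ'
    exact GP.mrel_trans s1 (GP.mrel_trans s2 s3)
end
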